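/- arXiv:2309.09054 — 7 statements merged into one kernel-verified Lean document; each statement's English description precedes it below -/
import Mathlib

section
/- Let $P_l(u) = u^{2l} + \sum_{j=1}^l u^{2(l-j)} y^j$ be a polynomial in $u$ with coefficients in the polynomial ring $\mathbb{Q}[y^1,\dots,y^l]$, and define $g^{ij} = \sum_{p=1}^l \frac{\partial y^i}{\partial x^p}\frac{\partial y^j}{\partial x^p}$ where $y^i = \sigma_i((x^1)^2,\dots,(x^l)^2)$ is the $i$-th elementary symmetric polynomial in the squares of the variables $x^1,\dots,x^l$. Then $\sum_{i,j=1}^l g^{ij} u^{2(l-i)} v^{2(l-j)} = \frac{2}{u^2-v^2}\big(u P_l'(u) P_l(v) - v P_l(u) P_l'(v)\big)$, where $P_l'$ denotes the derivative with respect to the first argument. -/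
open MvPolynomial

/-- `y^i = σ_i((x^1)^2, …, (x^l)^2)`, the `i`-th elementary symmetric polynomial in the
squares of the variables, as a polynomial in `x^1, …, x^l`. -/
noncomputable def yB (l : ℕ) (i : ℕ) : MvPolynomial (Fin l) ℚ :=
  ∑ s ∈ Finset.univ.powersetCard i, ∏ p ∈ s, (X p) ^ 2

/-- `g^{ij} = ∑_p ∂y^i/∂x^p ⬝ ∂y^j/∂x^p`, the `B_l` orbit-space metric components. -/
noncomputable def gB (l : ℕ) (i j : ℕ) : MvPolynomial (Fin l) ℚ :=
  ∑ p : Fin l, pderiv p (yB l i) * pderiv p (yB l j)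

/-- `P_l(u) = u^{2l} + ∑_{j=1}^l u^{2(l-j)} y^j`, as a polynomial in the variable `X w`
(`w = 0` for `u`, `w = 1` for `v`) with coefficients in `ℚ[x^1,…,x^l]` (via the `y`'s). -/
noncomputable def PB (l : ℕ) (w : Fin 2) :
    MvPolynomial (Fin 2) (MvPolynomial (Fin l) ℚ) :=
  X w ^ (2 * l) + ∑ j ∈ Finset.Icc 1 l, C (yB l j) * X w ^ (2 * (l - j))

/-- generic Leibniz rule for `pderiv` on finite products -/
lemma pderiv_finset_prod {σ R ι : Type*} [CommSemiring R] (i : σ)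
    (s : Finset ι) (f : ι → MvPolynomial σ R) [DecidableEq ι] :
    pderiv i (∏ q ∈ s, f q) = ∑ q ∈ s, (∏ r ∈ s.erase q, f r) * pderiv i (f q) := by
  induction s using Finset.induction_on with
  | empty => simp
  | @insert a s ha ih =>
    rw [Finset.prod_insert ha, pderiv_mul, ih, Finset.sum_insert ha,
      Finset.erase_insert ha, Finset.mul_sum]
    congr 1
    · ring
    · refine Finset.sum_congr rfl fun q hq => ?_
      have hqa : q ≠ a := fun h => ha (h ▸ hq)
      have haq : a ∉ s.erase q := fun h => ha (Finset.mem_of_mem_erase h)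
      rw [Finset.erase_insert_of_ne hqa.symm, Finset.prod_insert haq]
      ring

lemma sum_Icc_one {M : Type*} [AddCommMonoid M] (l : ℕ) (f : ℕ → M) :
    ∑ i ∈ Finset.Icc 1 l, f i = ∑ i ∈ Finset.range l, f (i + 1) := by
  rw [← Finset.Ico_add_one_right_eq_Icc, Finset.sum_Ico_eq_sum_range]
  simp [add_comm]

/-- grouping `∏ (X w ^ 2 + C (X q ^ 2))` by cardinality. -/
lemma prod_key (l : ℕ) (s : Finset (Fin l)) (w : Fin 2) :
    ∏ q ∈ s, ((X w : MvPolynomial (Fin 2) (MvPolynomial (Fin l) ℚ)) ^ 2 + C (X q ^ 2)) =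
      ∑ i ∈ Finset.range (s.card + 1),
        C (∑ t ∈ s.powersetCard i, ∏ q ∈ t, (X q : MvPolynomial (Fin l) ℚ) ^ 2) *
          X w ^ (2 * (s.card - i)) := by
  have h1 : ∀ q : Fin l, (X w : MvPolynomial (Fin 2) (MvPolynomial (Fin l) ℚ)) ^ 2
      + C (X q ^ 2) = C (X q ^ 2) + X w ^ 2 := fun q => add_comm _ _
  rw [Finset.prod_congr rfl fun q _ => h1 q, Finset.prod_add, Finset.sum_powerset]
  refine Finset.sum_congr rfl fun i hi => ?_
  rw [map_sum, Finset.sum_mul]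
  refine Finset.sum_congr rfl fun t ht => ?_
  obtain ⟨hts, htc⟩ := Finset.mem_powersetCard.mp ht
  rw [map_prod, Finset.prod_const, Finset.card_sdiff_of_subset hts, ← pow_mul, htc]

noncomputable def QB (l : ℕ) (p : Fin l) (w : Fin 2) :
    MvPolynomial (Fin 2) (MvPolynomial (Fin l) ℚ) :=
  ∏ q ∈ Finset.univ.erase p, (X w ^ 2 + C (X q ^ 2))

lemma PB_eq_prod (l : ℕ) (w : Fin 2) :
    PB l w = ∏ p : Fin l, ((X w : MvPolynomial (Fin 2) (MvPolynomial (Fin l) ℚ)) ^ 2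
      + C (X p ^ 2)) := by
  rw [prod_key]
  have hc : (Finset.univ : Finset (Fin l)).card = l := by simp
  rw [hc]
  rw [Finset.sum_range_succ']
  rw [PB, add_comm]
  congr 1
  · rw [sum_Icc_one]
    refine Finset.sum_congr rfl fun i hi => ?_
    rw [yB]
  · simp

lemma PB_factor (l : ℕ) (p : Fin l) (w : Fin 2) :
    PB l w = (X w ^ 2 + C (X p ^ 2)) * QB l p w := by
  rw [PB_eq_prod, QB]
  exact (Finset.mul_prod_erase _ _ (Finset.mem_univ p)).symm

lemma pderiv_PB (l : ℕ) (w : Fin 2) :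
    pderiv w (PB l w) = ∑ p : Fin l, 2 * X w * QB l p w := by
  rw [PB_eq_prod, pderiv_finset_prod]
  refine Finset.sum_congr rfl fun p _ => ?_
  have : pderiv w ((X w : MvPolynomial (Fin 2) (MvPolynomial (Fin l) ℚ)) ^ 2 + C (X p ^ 2))
      = 2 * X w := by
    rw [map_add, pderiv_C, pderiv_pow, pderiv_X_self]
    ring
  rw [this, QB]
  ring

lemma pderiv_sq_prod (l : ℕ) (p : Fin l) (s : Finset (Fin l)) :
    pderiv p (∏ q ∈ s, (X q : MvPolynomial (Fin l) ℚ) ^ 2) =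
      if p ∈ s then 2 * X p * ∏ q ∈ s.erase p, (X q : MvPolynomial (Fin l) ℚ) ^ 2 else 0 := by
  rw [pderiv_finset_prod]
  have h : ∀ q : Fin l, pderiv p ((X q : MvPolynomial (Fin l) ℚ) ^ 2)
      = if q = p then 2 * X p else 0 := by
    intro q
    by_cases h : q = p
    · subst h; rw [if_pos rfl, pderiv_pow, pderiv_X_self]; ring
    · rw [if_neg h, pderiv_pow, pderiv_X_of_ne h, mul_zero]
  simp only [h, mul_ite, mul_zero]
  rw [Finset.sum_ite_eq' s p]
  split
  · ring
  · rfl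

lemma sum_C_pderiv (l : ℕ) (hl : 1 ≤ l) (p : Fin l) (w : Fin 2) :
    ∑ i ∈ Finset.Icc 1 l,
        (C (pderiv p (yB l i)) : MvPolynomial (Fin 2) (MvPolynomial (Fin l) ℚ)) *
          X w ^ (2 * (l - i))
      = C (2 * X p) * QB l p w := by
  have hq : QB l p w = ∑ i ∈ Finset.range l,
      C (∑ t ∈ (Finset.univ.erase p).powersetCard i,
          ∏ q ∈ t, (X q : MvPolynomial (Fin l) ℚ) ^ 2)
        * X w ^ (2 * (l - 1 - i)) := by
    rw [QB, prod_key]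
    have hc : (Finset.univ.erase p).card = l - 1 := by
      rw [Finset.card_erase_of_mem (Finset.mem_univ p)]; simp
    rw [hc, Nat.sub_add_cancel hl]
  rw [hq, Finset.mul_sum, sum_Icc_one]
  refine Finset.sum_congr rfl fun i hi => ?_
  have hexp : l - 1 - i = l - (i + 1) := by omega
  rw [hexp, ← mul_assoc, ← map_mul]
  congr 2
  rw [yB, map_sum]
  simp only [pderiv_sq_prod]
  rw [← Finset.sum_filter, Finset.mul_sum]
  refine Finset.sum_nbij' (fun s => s.erase p) (fun t => insert p t) ?_ ?_ ?_ ?_ ?_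
  · intro s hs
    rw [Finset.mem_filter, Finset.mem_powersetCard] at hs
    rw [Finset.mem_powersetCard]
    exact ⟨Finset.erase_subset_erase p hs.1.1,
      by rw [Finset.card_erase_of_mem hs.2, hs.1.2]; omega⟩
  · intro t ht
    rw [Finset.mem_powersetCard] at ht
    have hpt : p ∉ t := fun h => (Finset.mem_erase.mp (ht.1 h)).1 rfl
    rw [Finset.mem_filter, Finset.mem_powersetCard]
    exact ⟨⟨Finset.subset_univ _, by rw [Finset.card_insert_of_notMem hpt, ht.2]⟩,
      Finset.mem_insert_self p t⟩
  · intro s hs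
    rw [Finset.mem_filter] at hs
    exact Finset.insert_erase hs.2
  · intro t ht
    rw [Finset.mem_powersetCard] at ht
    exact Finset.erase_insert (fun h => (Finset.mem_erase.mp (ht.1 h)).1 rfl)
  · intro s hs
    rfl

/-- The generating function identity
`∑_{i,j} g^{ij} u^{2(l-i)} v^{2(l-j)} = (2/(u²-v²)) (u P_l'(u) P_l(v) - v P_l(u) P_l'(v))`,
stated in the denominator-cleared form. -/
theorem stmt0 (l : ℕ) (hl : 1 ≤ l) :
    (X 0 ^ 2 - X 1 ^ 2) *
        ∑ i ∈ Finset.Icc 1 l, ∑ j ∈ Finset.Icc 1 l,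
          (C (gB l i j) : MvPolynomial (Fin 2) (MvPolynomial (Fin l) ℚ)) *
            X 0 ^ (2 * (l - i)) * X 1 ^ (2 * (l - j))
      = 2 * (X 0 * pderiv 0 (PB l 0) * PB l 1 - X 1 * PB l 0 * pderiv 1 (PB l 1)) := by
  have h1 : ∀ i j : ℕ, (C (gB l i j) : MvPolynomial (Fin 2) (MvPolynomial (Fin l) ℚ)) *
      X 0 ^ (2 * (l - i)) * X 1 ^ (2 * (l - j))
      = ∑ p : Fin l, (C (pderiv p (yB l i)) * X 0 ^ (2 * (l - i))) *
          (C (pderiv p (yB l j)) * X 1 ^ (2 * (l - j))) := by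
    intro i j
    rw [gB, map_sum, Finset.sum_mul, Finset.sum_mul]
    refine Finset.sum_congr rfl fun p _ => ?_
    rw [map_mul]; ring
  have hR : (∑ p : Fin l, (C (2 * X p) * QB l p 0) * (C (2 * X p) * QB l p 1))
      = ∑ p : Fin l, ∑ i ∈ Finset.Icc 1 l, ∑ j ∈ Finset.Icc 1 l,
          (C (pderiv p (yB l i)) * X 0 ^ (2 * (l - i))) *
            (C (pderiv p (yB l j)) * X 1 ^ (2 * (l - j))) := by
    refine Finset.sum_congr rfl fun p _ => ?_
    rw [← sum_C_pderiv l hl p 0, ← sum_C_pderiv l hl p 1, Finset.sum_mul_sum]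
  have hL : (∑ i ∈ Finset.Icc 1 l, ∑ j ∈ Finset.Icc 1 l,
      (C (gB l i j) : MvPolynomial (Fin 2) (MvPolynomial (Fin l) ℚ)) *
        X 0 ^ (2 * (l - i)) * X 1 ^ (2 * (l - j)))
      = ∑ p : Fin l, (C (2 * X p) * QB l p 0) * (C (2 * X p) * QB l p 1) := by
    simp only [h1]
    rw [hR]
    exact (Finset.sum_congr rfl fun i _ => Finset.sum_comm).trans Finset.sum_comm
  rw [hL, pderiv_PB l 0, pderiv_PB l 1, Finset.mul_sum, Finset.mul_sum, Finset.sum_mul,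
    Finset.mul_sum, ← Finset.sum_sub_distrib, Finset.mul_sum]
  refine Finset.sum_congr rfl fun p _ => ?_
  rw [PB_factor l p 0, PB_factor l p 1]
  have hc2 : (C (2 * X p) : MvPolynomial (Fin 2) (MvPolynomial (Fin l) ℚ)) = 2 * C (X p) := by
    rw [map_mul, map_ofNat]
  simp only [map_pow, hc2]
  ring
end

section
/- With $g^{ij}$ defined as the $B_l$ orbit-space metric components via $g^{ij} = \sum_{p=1}^l \partial_{x^p}\sigma_i(x_1^2,\dots,x_l^2)\cdot\partial_{x^p}\sigma_j(x_1^2,\dots,x_l^2)$ expressed as polynomials in $y^1,\dots,y^l$, each $g^{ij}$ is a polynomial of total weighted degree $i+j-1$ in the $y$-variables, where $y^p$ is assigned degree $p$. -/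
open MvPolynomial

/-!
Since `∂y^i/∂x^p = 2 x^p (∂_p σ_i)((x^1)², …, (x^l)²)`, the polynomial `g^{ij}` is the image
under `u_p ↦ (x^p)²` of `H^{ij} = 4 ∑_p u_p ∂_p σ_i ∂_p σ_j`, which is symmetric in `u` and
homogeneous of degree `i + j - 1`. By the fundamental theorem of symmetric polynomials,
`H^{ij} = G(σ_1, …, σ_l)` for some `G`. As `σ_k` is homogeneous of degree `k`, substituting the
`σ_k` maps the weighted-degree-`m` component of `G` to the degree-`m` component of `H^{ij}`, so
the component of weighted degree `i + j - 1` alone already gives `H^{ij}`.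
-/

namespace MvPolynomial

variable {R σ τ : Type*} [CommSemiring R]

theorem pderiv_aeval [Fintype σ] (f : σ → MvPolynomial τ R) (i : τ) (F : MvPolynomial σ R) :
    pderiv i (aeval f F) = ∑ q, aeval f (pderiv q F) * pderiv i (f q) := by
  classical
  induction F using MvPolynomial.induction_on with
  | C a => simp [algebraMap_eq]
  | add F G hF hG => simp only [map_add, hF, hG, add_mul, Finset.sum_add_distrib]
  | mul_X F q ih =>
    simp only [map_mul, aeval_X, pderiv_mul, ih, pderiv_X, map_add, add_mul,
      Finset.sum_add_distrib, Finset.sum_mul]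
    congr 1
    · refine Finset.sum_congr rfl fun r _ => by ring
    · rw [Finset.sum_eq_single q]
      · simp
      · intro r _ hr
        simp [hr.symm]
      · simp

theorem pderiv_aeval_X_sq [Fintype σ] (p : σ) (F : MvPolynomial σ R) :
    pderiv p (aeval (fun q => X q ^ 2 : σ → MvPolynomial σ R) F) =
      2 * X p * aeval (fun q => X q ^ 2 : σ → MvPolynomial σ R) (pderiv p F) := by
  rw [pderiv_aeval, Finset.sum_eq_single p]
  · simp only [aeval_eq_bind₁, pderiv_pow, pderiv_X_self, Nat.cast_ofNat]
    ring
  · intro q _ hq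
    simp [pderiv_X_of_ne hq]
  · simp

theorem IsWeightedHomogeneous.aeval {M : Type*} [AddCommMonoid M] {w : σ → M} {v : τ → M}
    {f : σ → MvPolynomial τ R} (hf : ∀ p, (f p).IsWeightedHomogeneous v (w p))
    {G : MvPolynomial σ R} {D : M} (hG : G.IsWeightedHomogeneous w D) :
    (aeval f G).IsWeightedHomogeneous v D := by
  induction hG using IsWeightedHomogeneous.induction_on with
  | zero => simpa using isWeightedHomogeneous_zero R v D
  | add F G _ _ hF hG => simpa using hF.add hG
  | monomial d r hd =>
    rw [aeval_monomial, algebraMap_eq, ← hd, Finsupp.weight_apply, Finsupp.prod, Finsupp.sum]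
    exact (IsWeightedHomogeneous.prod _ _ _ fun p _ => (hf p).pow (d p)).C_mul r

theorem weightedHomogeneousComponent_aeval {M : Type*} [AddCommMonoid M] {w : σ → M}
    {v : τ → M} {f : σ → MvPolynomial τ R} (hf : ∀ p, (f p).IsWeightedHomogeneous v (w p))
    (D : M) (G : MvPolynomial σ R) :
    weightedHomogeneousComponent v D (aeval f G) =
      aeval f (weightedHomogeneousComponent w D G) := by
  have hfin := weightedHomogeneousComponent_finsupp (w := w) G
  conv_lhs => rw [← sum_weightedHomogeneousComponent w G, map_finsum _ hfin,
    map_finsum _ (hfin.subset fun m hm h0 => hm (by simp [h0]))]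
  rw [finsum_eq_single _ D]
  · exact weightedHomogeneousComponent_eq_self
      ((weightedHomogeneousComponent_isWeightedHomogeneous D G).aeval hf)
  · intro m hm
    exact ((weightedHomogeneousComponent_isWeightedHomogeneous m G).aeval hf
      ).weightedHomogeneousComponent_ne D hm.symm

theorem isHomogeneous_esymm [Fintype σ] (n : ℕ) : (esymm σ R n).IsHomogeneous n := by
  refine IsHomogeneous.sum _ _ _ fun t ht => ?_
  simpa [(Finset.mem_powersetCard.mp ht).2] using
    IsHomogeneous.prod t (fun i => (X i : MvPolynomial σ R)) (fun _ => 1)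
      fun i _ => isHomogeneous_X R i

variable [Fintype σ]

noncomputable def metricInSquares (F G : MvPolynomial σ R) : MvPolynomial σ R :=
  4 * ∑ p, X p * pderiv p F * pderiv p G

theorem aeval_X_sq_metricInSquares (F G : MvPolynomial σ R) :
    aeval (fun q => X q ^ 2 : σ → MvPolynomial σ R) (metricInSquares F G) =
      ∑ p, pderiv p (aeval (fun q => X q ^ 2 : σ → MvPolynomial σ R) F) *
        pderiv p (aeval (fun q => X q ^ 2 : σ → MvPolynomial σ R) G) := by
  simp only [metricInSquares, map_mul, map_sum, map_ofNat, aeval_X, pderiv_aeval_X_sq,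
    Finset.mul_sum]
  exact Finset.sum_congr rfl fun p _ => by ring

theorem IsSymmetric.metricInSquares {F G : MvPolynomial σ R} (hF : F.IsSymmetric)
    (hG : G.IsSymmetric) : (metricInSquares F G).IsSymmetric := by
  intro e
  have term : ∀ p, rename e (X p * pderiv p F * pderiv p G) =
      X (e p) * pderiv (e p) F * pderiv (e p) G := fun p => by
    rw [map_mul, map_mul, rename_X, ← pderiv_rename e.injective, ← pderiv_rename e.injective,
      hF e, hG e]
  rw [MvPolynomial.metricInSquares, map_mul, map_sum, map_ofNat]
  simp only [term]
  exact congrArg (4 * ·) (Equiv.sum_comp e fun p => X p * pderiv p F * pderiv p G)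

theorem IsHomogeneous.metricInSquares {F G : MvPolynomial σ R} {m n : ℕ}
    (hF : F.IsHomogeneous (m + 1)) (hG : G.IsHomogeneous (n + 1)) :
    (metricInSquares F G).IsHomogeneous (m + n + 1) := by
  have hsum : (∑ p, X p * pderiv p F * pderiv p G).IsHomogeneous (1 + m + n) :=
    IsHomogeneous.sum _ _ _ fun p _ => ((isHomogeneous_X R p).mul hF.pderiv).mul hG.pderiv
  rw [MvPolynomial.metricInSquares, ← map_ofNat C 4]
  simpa only [add_comm 1, add_right_comm m 1] using hsum.C_mul 4

end MvPolynomial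

theorem yB_eq_aeval_esymm (l k : ℕ) :
    yB l k = aeval (fun q => X q ^ 2 : Fin l → MvPolynomial (Fin l) ℚ) (esymm (Fin l) ℚ k) := by
  simp [yB, esymm, map_sum, map_prod]

/-- The variable `p : Fin l` of `G` stands for `y^{p+1}`, and `a, b` for the indices
`i = a + 1`, `j = b + 1`. -/
theorem stmt1 (l : ℕ) (a b : Fin l) :
    ∃ G : MvPolynomial (Fin l) ℚ,
      G.IsWeightedHomogeneous (fun p : Fin l => (p : ℕ) + 1) ((a : ℕ) + (b : ℕ) + 1) ∧
      aeval (fun p : Fin l => yB l ((p : ℕ) + 1)) G = gB l ((a : ℕ) + 1) ((b : ℕ) + 1) := by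
  set H := metricInSquares (esymm (Fin l) ℚ ((a : ℕ) + 1)) (esymm (Fin l) ℚ ((b : ℕ) + 1))
    with hH_def
  obtain ⟨G, hG⟩ : ∃ G, aeval (fun i : Fin l => esymm (Fin l) ℚ ((i : ℕ) + 1)) G = H := by
    obtain ⟨G, hG⟩ := esymmAlgHom_fin_surjective ℚ le_rfl
      ⟨H, (esymm_isSymmetric _ _ _).metricInSquares (esymm_isSymmetric _ _ _)⟩
    exact ⟨G, by rw [← esymmAlgHom_apply, hG]⟩
  have hH : H.IsHomogeneous ((a : ℕ) + (b : ℕ) + 1) :=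
    (isHomogeneous_esymm _).metricInSquares (isHomogeneous_esymm _)
  refine ⟨weightedHomogeneousComponent _ _ G,
    weightedHomogeneousComponent_isWeightedHomogeneous _ _, ?_⟩
  have hcomponent : aeval (fun i : Fin l => esymm (Fin l) ℚ ((i : ℕ) + 1))
      (weightedHomogeneousComponent (fun p : Fin l => (p : ℕ) + 1) ((a : ℕ) + (b : ℕ) + 1) G) =
        H := by
    rw [← weightedHomogeneousComponent_aeval (fun i => isHomogeneous_esymm _), hG]
    exact weightedHomogeneousComponent_eq_self hH
  rw [gB, yB_eq_aeval_esymm, yB_eq_aeval_esymm, ← aeval_X_sq_metricInSquares, ← hH_def,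
    ← hcomponent, comp_aeval_apply]
  simp only [yB_eq_aeval_esymm]
end

section
/- Each component $g^{ij}$ of the $B_l$ orbit-space metric, viewed as a polynomial in $y^1,\dots,y^l$, has total degree at most $2$ in the variables $y^1,\dots,y^l$ (where each $y^p$ counts as degree $1$). -/
open MvPolynomial

open Finset

/-!
Write `y^k` for the `k`-th elementary symmetric polynomial in the squares `x_p^2` of a finite set
`s` of variables. The closed formula
  `g^{ij} = 4 ∑_{p < i} (i + j - 1 - 2p) y^p y^{i+j-1-p}`   (with `y^0 = 1`)
is proved by induction on `s`: adding a variable `a` turns `y^{k+1}` into `y^{k+1} + x_a^2 y^k`,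
and both sides of the formula transform in the same way under this substitution. Since each `y^k`
is `1`, `0` or one of the coordinates `y^1, …, y^l`, the right-hand side has degree at most `2`
in them.
-/

section MetricQuadratic

variable {A : Type*} [CommRing A]

/-- Summing over `p < i` instead of the symmetric range `p < min i j` changes nothing, as the
terms for `p` and `i + j - 1 - p` cancel (`metricQuadratic_zero_right` is the case `j = 0`); it
keeps the index `i + j - 1 - p ≥ j` free of truncated subtraction. -/
def metricQuadratic (u : ℕ → A) (i j : ℕ) : A :=
  ∑ p ∈ range i, (i + j - 1 - 2 * p : ℤ) • (u p * u (i + j - 1 - p))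

@[simp]
lemma metricQuadratic_zero_left (u : ℕ → A) (j : ℕ) : metricQuadratic u 0 j = 0 := by
  simp [metricQuadratic]

@[simp]
lemma metricQuadratic_zero_right (u : ℕ → A) (i : ℕ) : metricQuadratic u i 0 = 0 := by
  have reflect := sum_range_reflect (fun p => (p : ℤ) • (u p * u (i - 1 - p))) i
  have split : ∀ p ∈ range i, (i - 1 - 2 * p : ℤ) • (u p * u (i - 1 - p)) =
      ((i - 1 - p : ℕ) : ℤ) • (u (i - 1 - p) * u (i - 1 - (i - 1 - p)))
        - (p : ℤ) • (u p * u (i - 1 - p)) := by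
    intro p hp
    have hp : p < i := mem_range.1 hp
    rw [show i - 1 - (i - 1 - p) = p by omega, mul_comm (u p), ← sub_smul]
    congr 1
    omega
  simp only [metricQuadratic, Nat.cast_zero, add_zero]
  rw [sum_congr rfl split, sum_sub_distrib, reflect, sub_self]

lemma map_metricQuadratic {B F : Type*} [CommRing B] [FunLike F A B] [RingHomClass F A B]
    (φ : F) (u : ℕ → A) (i j : ℕ) :
    φ (metricQuadratic u i j) = metricQuadratic (fun k => φ (u k)) i j := by
  simp only [metricQuadratic, map_sum, map_zsmul, map_mul]

lemma metricQuadratic_of_succ_eq_add_mul {u v : ℕ → A} (w : A) (hv0 : v 0 = u 0)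
    (hv : ∀ k, v (k + 1) = u (k + 1) + w * u k) (i j : ℕ) :
    metricQuadratic v (i + 1) (j + 1) = metricQuadratic u (i + 1) (j + 1)
      + w * (metricQuadratic u (i + 1) j + metricQuadratic u i (j + 1) + u i * u j)
      + w ^ 2 * metricQuadratic u i j := by
  -- the `w`-linear terms of the left side exceed those of the right side by this telescoping sum
  have telescope : u i * u j
      = ∑ p ∈ range i, (u (p + 1) * u (i + j - (p + 1)) - u p * u (i + j - p))
        + u 0 * u (i + j) := by
    rw [sum_range_sub (fun p => u p * u (i + j - p)), Nat.add_sub_cancel_left, Nat.sub_zero,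
      sub_add_cancel]
  simp only [metricQuadratic, sum_range_succ' _ i]
  rw [telescope]
  have hsum : ∑ p ∈ range i, (↑(i + 1) + ↑(j + 1) - 1 - 2 * ↑(p + 1) : ℤ) •
        (v (p + 1) * v (i + 1 + (j + 1) - 1 - (p + 1)))
      = ∑ p ∈ range i, (↑(i + 1) + ↑(j + 1) - 1 - 2 * ↑(p + 1) : ℤ) •
          (u (p + 1) * u (i + 1 + (j + 1) - 1 - (p + 1)))
        + w * (∑ p ∈ range i, (↑(i + 1) + ↑j - 1 - 2 * ↑(p + 1) : ℤ) •
              (u (p + 1) * u (i + 1 + j - 1 - (p + 1)))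
            + ∑ p ∈ range i, (↑i + ↑(j + 1) - 1 - 2 * ↑p : ℤ) •
                (u p * u (i + (j + 1) - 1 - p))
            + ∑ p ∈ range i, (u (p + 1) * u (i + j - (p + 1)) - u p * u (i + j - p)))
        + w ^ 2 * ∑ p ∈ range i, (↑i + ↑j - 1 - 2 * ↑p : ℤ) •
            (u p * u (i + j - 1 - p)) := by
    simp only [mul_sum, ← sum_add_distrib]
    refine sum_congr rfl fun p hp => ?_
    obtain ⟨q, hq⟩ : ∃ q, i + j - 1 - p = q := ⟨_, rfl⟩
    have hp := mem_range.1 hp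
    simp only [show i + 1 + (j + 1) - 1 - (p + 1) = q + 1 by omega,
      show i + 1 + j - 1 - (p + 1) = q by omega, show i + (j + 1) - 1 - p = q + 1 by omega,
      show i + j - (p + 1) = q by omega, show i + j - p = q + 1 by omega, hq, hv, zsmul_eq_mul]
    push_cast
    ring
  rw [hsum, hv0, show i + 1 + (j + 1) - 1 - 0 = i + j + 1 by omega, hv,
    show i + 1 + j - 1 - 0 = i + j by omega]
  simp only [zsmul_eq_mul]
  push_cast
  ring

lemma totalDegree_metricQuadratic_le {σ R : Type*} [CommRing R] {u : ℕ → MvPolynomial σ R}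
    {n : ℕ} (hu : ∀ k, (u k).totalDegree ≤ n) (i j : ℕ) :
    (metricQuadratic u i j).totalDegree ≤ 2 * n := by
  rw [← mem_restrictTotalDegree]
  refine sum_mem fun p _ => zsmul_mem ?_ _
  rw [mem_restrictTotalDegree, two_mul]
  exact (totalDegree_mul _ _).trans (add_le_add (hu _) (hu _))

end MetricQuadratic

section OrbitMetric

variable {σ R : Type*} [CommRing R]

noncomputable def esymmSq (s : Finset σ) (k : ℕ) : MvPolynomial σ R :=
  ∑ t ∈ s.powersetCard k, ∏ p ∈ t, X p ^ 2

noncomputable def orbitMetric (s : Finset σ) (i j : ℕ) : MvPolynomial σ R :=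
  ∑ p ∈ s, pderiv p (esymmSq s i) * pderiv p (esymmSq s j)

@[simp]
lemma esymmSq_zero (s : Finset σ) : (esymmSq s 0 : MvPolynomial σ R) = 1 := by
  simp [esymmSq]

lemma esymmSq_eq_zero_of_card_lt {s : Finset σ} {k : ℕ} (h : s.card < k) :
    (esymmSq s k : MvPolynomial σ R) = 0 := by
  rw [esymmSq, powersetCard_eq_empty.2 h, sum_empty]

lemma pderiv_esymmSq_of_notMem {s : Finset σ} {p : σ} (hp : p ∉ s) (k : ℕ) :
    pderiv p (esymmSq s k : MvPolynomial σ R) = 0 := by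
  classical
  nontriviality R
  refine pderiv_eq_zero_of_notMem_vars fun h => hp ?_
  obtain ⟨t, ht, h⟩ := mem_biUnion.1 (vars_sum_subset _ _ h)
  obtain ⟨q, hq, h⟩ := mem_biUnion.1 (vars_prod _ h)
  replace h := vars_pow _ _ h
  rw [vars_X, mem_singleton] at h
  exact h ▸ (mem_powersetCard.1 ht).1 hq

@[simp]
lemma orbitMetric_zero_left (s : Finset σ) (j : ℕ) :
    (orbitMetric s 0 j : MvPolynomial σ R) = 0 := by
  simp [orbitMetric]

@[simp]
lemma orbitMetric_zero_right (s : Finset σ) (i : ℕ) :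
    (orbitMetric s i 0 : MvPolynomial σ R) = 0 := by
  simp [orbitMetric]

variable [DecidableEq σ]

lemma esymmSq_insert_succ {s : Finset σ} {a : σ} (ha : a ∉ s) (k : ℕ) :
    (esymmSq (insert a s) (k + 1) : MvPolynomial σ R)
      = esymmSq s (k + 1) + X a ^ 2 * esymmSq s k := by
  have hnot : ∀ t ∈ s.powersetCard k, a ∉ t := fun t ht h => ha ((mem_powersetCard.1 ht).1 h)
  rw [esymmSq, powersetCard_succ_insert ha, sum_union, sum_image, esymmSq, esymmSq, mul_sum]
  · exact congrArg _ (sum_congr rfl fun t ht => prod_insert (hnot t ht))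
  · intro t ht t' ht' h
    rw [← erase_insert (hnot t ht), ← erase_insert (hnot t' ht'), h]
  · refine disjoint_left.2 fun t ht ht' => ?_
    obtain ⟨t', ht', rfl⟩ := mem_image.1 ht'
    exact ha ((mem_powersetCard.1 ht).1 (mem_insert_self a t'))

lemma pderiv_esymmSq_insert_succ_self {s : Finset σ} {a : σ} (ha : a ∉ s) (k : ℕ) :
    pderiv a (esymmSq (insert a s) (k + 1) : MvPolynomial σ R) = 2 * X a * esymmSq s k := by
  rw [esymmSq_insert_succ ha, map_add, Derivation.leibniz, pderiv_esymmSq_of_notMem ha,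
    pderiv_esymmSq_of_notMem ha, pderiv_pow, pderiv_X_self, smul_eq_mul]
  push_cast
  ring

lemma pderiv_esymmSq_insert_succ_of_ne {s : Finset σ} {a p : σ} (ha : a ∉ s) (hpa : p ≠ a)
    (k : ℕ) :
    pderiv p (esymmSq (insert a s) (k + 1) : MvPolynomial σ R)
      = pderiv p (esymmSq s (k + 1)) + X a ^ 2 * pderiv p (esymmSq s k) := by
  rw [esymmSq_insert_succ ha, map_add, Derivation.leibniz, pderiv_pow, pderiv_X_of_ne hpa.symm]
  simp

lemma orbitMetric_insert_succ_succ {s : Finset σ} {a : σ} (ha : a ∉ s) (i j : ℕ) :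
    (orbitMetric (insert a s) (i + 1) (j + 1) : MvPolynomial σ R)
      = orbitMetric s (i + 1) (j + 1)
        + X a ^ 2 * (orbitMetric s (i + 1) j + orbitMetric s i (j + 1)
          + 4 * (esymmSq s i * esymmSq s j))
        + (X a ^ 2) ^ 2 * orbitMetric s i j := by
  have hs : ∀ p ∈ s, p ≠ a := fun p hp h => ha (h ▸ hp)
  rw [orbitMetric, sum_insert ha, pderiv_esymmSq_insert_succ_self ha,
    pderiv_esymmSq_insert_succ_self ha,
    sum_congr rfl fun p hp => by rw [pderiv_esymmSq_insert_succ_of_ne ha (hs p hp),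
      pderiv_esymmSq_insert_succ_of_ne ha (hs p hp)]]
  have expand : ∑ p ∈ s, (pderiv p (esymmSq s (i + 1)) + X a ^ 2 * pderiv p (esymmSq s i))
        * (pderiv p (esymmSq s (j + 1)) + X a ^ 2 * pderiv p (esymmSq s j))
      = orbitMetric s (i + 1) (j + 1)
        + X a ^ 2 * (orbitMetric s (i + 1) j + orbitMetric s i (j + 1))
        + (X a ^ 2) ^ 2 * (orbitMetric s i j : MvPolynomial σ R) := by
    simp only [orbitMetric, mul_sum, ← sum_add_distrib]
    exact sum_congr rfl fun p _ => by ring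
  rw [expand]
  ring

theorem orbitMetric_eq_four_mul_metricQuadratic (s : Finset σ) (i j : ℕ) :
    (orbitMetric s i j : MvPolynomial σ R) = 4 * metricQuadratic (esymmSq s) i j := by
  induction s using Finset.induction_on generalizing i j with
  | empty =>
    rcases j with _ | j
    · simp
    · have : metricQuadratic (esymmSq ∅ : ℕ → MvPolynomial σ R) i (j + 1) = 0 :=
        sum_eq_zero fun p hp => by
          have hp := mem_range.1 hp
          rw [esymmSq_eq_zero_of_card_lt (k := i + (j + 1) - 1 - p) (by rw [card_empty]; omega),
            mul_zero, smul_zero]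
      simp [orbitMetric, this]
  | insert a s ha ih =>
    rcases i with _ | i
    · simp
    rcases j with _ | j
    · simp
    rw [orbitMetric_insert_succ_succ ha, ih, ih, ih, ih,
      metricQuadratic_of_succ_eq_add_mul (X a ^ 2) (by simp) (esymmSq_insert_succ ha)]
    ring

end OrbitMetric

section Coordinates

variable {R : Type*} [CommRing R]

/-- `y^k` as a polynomial in the coordinates `y^1, …, y^l`, with `y^0 = 1` and `y^k = 0` for
`k > l`. -/
noncomputable def yVar (l : ℕ) : ℕ → MvPolynomial (Fin l) R
  | 0 => 1
  | k + 1 => if h : k < l then X ⟨k, h⟩ else 0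

lemma totalDegree_yVar_le (l k : ℕ) : (yVar l k : MvPolynomial (Fin l) R).totalDegree ≤ 1 := by
  rcases k with _ | k
  · simp [yVar]
  · rw [yVar]
    split_ifs
    · -- `X p` is by definition `monomial (single p 1) 1`
      exact (totalDegree_monomial_le _ _).trans (by simp)
    · simp

lemma aeval_yVar (l k : ℕ) :
    aeval (fun p : Fin l => (esymmSq univ (p + 1) : MvPolynomial (Fin l) R))
      (yVar l k : MvPolynomial (Fin l) R) = esymmSq univ k := by
  rcases k with _ | k
  · simp [yVar]
  · rw [yVar]
    split_ifs with h
    · rw [aeval_X]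
    · rw [map_zero, esymmSq_eq_zero_of_card_lt (by simpa using h)]

end Coordinates

/-- Each `g^{ij}`, viewed as a polynomial in the variables `y^1, …, y^l` (the variable indexed
by `p : Fin l` standing for `y^{p+1}`), has total degree at most `2`. -/
theorem stmt2 (l : ℕ) (a b : Fin l) :
    ∃ G : MvPolynomial (Fin l) ℚ,
      G.totalDegree ≤ 2 ∧
      aeval (fun p : Fin l => yB l ((p : ℕ) + 1)) G = gB l ((a : ℕ) + 1) ((b : ℕ) + 1) := by
  refine ⟨4 • metricQuadratic (yVar l) (a + 1) (b + 1), ?_, ?_⟩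
  · exact (totalDegree_smul_le _ _).trans
      (totalDegree_metricQuadratic_le (totalDegree_yVar_le l) _ _)
  · change aeval (fun p : Fin l => (esymmSq univ (p + 1) : MvPolynomial (Fin l) ℚ)) _
      = orbitMetric univ (a + 1) (b + 1)
    rw [map_nsmul, map_metricQuadratic, orbitMetric_eq_four_mul_metricQuadratic, nsmul_eq_mul,
      Nat.cast_ofNat]
    simp only [aeval_yVar]
end

section
/- Setting $g_{(l)}^{l+1-i,l+1-j}$ to be the coefficients of the $B_l$ metric written in the relabeled variables $\tilde y^i = y^{k+1-i}$, for any $r \ge 1$ and all indices $i,j \ge 1$ with $i + j \le l$, one has the equality of polynomials $g_{(l)}^{l+1-i,\, l+1-j}(\tilde y) = g_{(l+r)}^{l+r+1-i,\, l+r+1-j}(\tilde y)$. -/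
open MvPolynomial

/-- `P_m(u) = u^{2m} + ∑_{j=1}^{m} u^{2(m-j)} ỹ^{κ+1-j}`, a polynomial in the variable `X w`
(`w = 0` for `u`, `w = 1` for `v`) over the polynomial ring `ℚ[ỹ^m : m ∈ ℤ]`;
here `κ = k` for the `B_{k,l}` structure and `κ = k + r` for the `B_{k+r,l+r}` structure,
according to the relabeling `ỹ^i = y^{κ+1-i}` of each structure. -/
noncomputable def Pgen (κ : ℤ) (m : ℕ) (w : Fin 2) :
    MvPolynomial (Fin 2) (MvPolynomial ℤ ℚ) :=
  X w ^ (2 * m) + ∑ j ∈ Finset.Icc 1 m, C (X (κ + 1 - (j : ℤ))) * X w ^ (2 * (m - j))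

/-- `2 (u P_m'(u) P_m(v) - v P_m(u) P_m'(v))`. -/
noncomputable def Ngen (κ : ℤ) (m : ℕ) : MvPolynomial (Fin 2) (MvPolynomial ℤ ℚ) :=
  2 * (X 0 * pderiv 0 (Pgen κ m 0) * Pgen κ m 1 - X 1 * Pgen κ m 0 * pderiv 1 (Pgen κ m 1))

abbrev R := MvPolynomial ℤ ℚ
abbrev S := MvPolynomial (Fin 2) R

noncomputable def EE (p q : ℕ) : Fin 2 →₀ ℕ :=
  Finsupp.single 0 (2*p) + Finsupp.single 1 (2*q)

lemma pair_eq (α β γ δ : ℕ) :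
    (Finsupp.single (0 : Fin 2) α + Finsupp.single 1 β =
      Finsupp.single 0 γ + Finsupp.single 1 δ) ↔ α = γ ∧ β = δ := by
  constructor
  · intro h
    constructor
    · have := DFunLike.congr_fun h 0
      simpa using this
    · have := DFunLike.congr_fun h 1
      simpa using this
  · rintro ⟨rfl, rfl⟩; rfl

lemma coeff_term (c : R) (a b p q : ℕ) :
    coeff (EE p q) (C c * X 0 ^ (2*a) * X 1 ^ (2*b) : S)
      = if a = p ∧ b = q then c else 0 := by
  rw [C_mul_X_pow_eq_monomial, X_pow_eq_monomial, monomial_mul, mul_one,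
    coeff_monomial, EE]
  simp only [pair_eq]
  congr 1
  exact propext (by omega)

lemma coeff_doublesum (s t : Finset ℕ) (c : ℕ → ℕ → R) (p q : ℕ) :
    coeff (EE p q) (∑ a ∈ s, ∑ b ∈ t, C (c a b) * X 0 ^ (2*a) * X 1 ^ (2*b) : S)
      = if p ∈ s ∧ q ∈ t then c p q else 0 := by
  simp only [coeff_sum, coeff_term]
  simp only [ite_and]
  rw [Finset.sum_comm]
  simp [Finset.sum_ite_eq, Finset.sum_ite_eq']

noncomputable def dc (κ : ℤ) (m a : ℕ) : R :=
  if a = m then 1 else X (κ + 1 - ((m : ℤ) - a))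

lemma Pexp (κ : ℤ) (m : ℕ) (w : Fin 2) :
    Pgen κ m w = ∑ a ∈ Finset.range (m+1), C (dc κ m a) * X w ^ (2*a) := by
  have hm : dc κ m m = 1 := by simp [dc]
  rw [Finset.sum_range_succ, hm, map_one, one_mul, Pgen, add_comm]
  congr 1
  refine Finset.sum_nbij' (fun j => m - j) (fun a => m - a) ?_ ?_ ?_ ?_ ?_
  · intro a ha; simp at ha ⊢; omega
  · intro a ha; simp at ha ⊢; omega
  · intro a ha; simp at ha ⊢; omega
  · intro a ha; simp at ha ⊢; omega
  · intro j hj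
    simp only [Finset.mem_Icc] at hj
    show C (X (κ + 1 - (j:ℤ))) * X w ^ (2*(m-j)) = C (dc κ m (m - j)) * X w ^ (2*(m-j))
    rw [dc, if_neg (by omega)]
    congr 3
    omega

lemma term_deriv (w : Fin 2) (c : R) (n : ℕ) :
    X w * pderiv w (C c * X w ^ n : S) = (n : S) * (C c * X w ^ n) := by
  cases n with
  | zero => simp
  | succ n =>
    rw [pderiv_C_mul, pderiv_pow, pderiv_X_self]
    push_cast
    ring

lemma Aexp (κ : ℤ) (m : ℕ) (w : Fin 2) :
    X w * pderiv w (Pgen κ m w)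
      = ∑ a ∈ Finset.range (m+1), ((2*a : ℕ) : S) * (C (dc κ m a) * X w ^ (2*a)) := by
  rw [Pexp, map_sum, Finset.mul_sum]
  refine Finset.sum_congr rfl fun a _ => ?_
  rw [term_deriv]

lemma Nexp (κ : ℤ) (m : ℕ) :
    Ngen κ m = ∑ a ∈ Finset.range (m+1), ∑ b ∈ Finset.range (m+1),
      C ((((4*(a:ℤ) - 4*(b:ℤ)) : ℤ) : R) * (dc κ m a * dc κ m b))
        * X 0 ^ (2*a) * X 1 ^ (2*b) := by
  have h : Ngen κ m = 2 * ((X 0 * pderiv 0 (Pgen κ m 0)) * Pgen κ m 1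
      - (X 1 * pderiv 1 (Pgen κ m 1)) * Pgen κ m 0) := by
    rw [Ngen]; ring
  rw [h, Aexp, Aexp, Pexp, Pexp, Finset.sum_mul_sum, Finset.sum_mul_sum]
  nth_rewrite 2 [Finset.sum_comm]
  rw [← Finset.sum_sub_distrib]
  simp only [← Finset.sum_sub_distrib]
  rw [Finset.mul_sum]
  simp only [Finset.mul_sum]
  refine Finset.sum_congr rfl fun a _ => Finset.sum_congr rfl fun b _ => ?_
  rw [C_mul, C_mul, map_intCast]
  push_cast
  ring

lemma coeff_Ngen (κ : ℤ) (m p q : ℕ) :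
    coeff (EE p q) (Ngen κ m)
      = if p ≤ m ∧ q ≤ m then (((4*(p:ℤ) - 4*(q:ℤ)) : ℤ) : R) * (dc κ m p * dc κ m q)
        else 0 := by
  rw [Nexp, coeff_doublesum]
  simp [Nat.lt_succ_iff]

lemma dc_stable (k : ℤ) (l r p : ℕ) (hp : p + 1 ≤ l) :
    dc k l p = dc (k + r) (l + r) p := by
  rw [dc, dc, if_neg (by omega), if_neg (by omega)]
  congr 1
  push_cast
  ring

lemma Ncoeff_eq (k : ℤ) (l r p q : ℕ) (hp : p + 1 ≤ l) (hq : q + 1 ≤ l) :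
    coeff (EE p q) (Ngen k l) = coeff (EE p q) (Ngen (k + r) (l + r)) := by
  rw [coeff_Ngen, coeff_Ngen, if_pos ⟨by omega, by omega⟩, if_pos ⟨by omega, by omega⟩,
    dc_stable k l r p hp, dc_stable k l r q hq]

lemma Gside (m : ℕ) (G : ℕ → ℕ → R) :
    (∑ a ∈ Finset.Icc 1 m, ∑ b ∈ Finset.Icc 1 m,
        (C (G a b) : S) * X 0 ^ (2*(m-a)) * X 1 ^ (2*(m-b)))
      = ∑ p ∈ Finset.range m, ∑ q ∈ Finset.range m,
          C (G (m-p) (m-q)) * X 0 ^ (2*p) * X 1 ^ (2*q) := by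
  refine Finset.sum_nbij' (fun a => m - a) (fun p => m - p) ?_ ?_ ?_ ?_ ?_
  · intro a ha; simp at ha ⊢; omega
  · intro a ha; simp at ha ⊢; omega
  · intro a ha; simp at ha ⊢; omega
  · intro a ha; simp at ha ⊢; omega
  · intro a ha
    simp only [Finset.mem_Icc] at ha
    show _ = ∑ q ∈ Finset.range m, C (G (m - (m - a)) (m - q)) * X 0 ^ (2*(m-a)) * X 1 ^ (2*q)
    refine Finset.sum_nbij' (fun b => m - b) (fun q => m - q) ?_ ?_ ?_ ?_ ?_
    · intro b hb; simp at hb ⊢; omega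
    · intro b hb; simp at hb ⊢; omega
    · intro b hb; simp at hb ⊢; omega
    · intro b hb; simp at hb ⊢; omega
    · intro b hb
      simp only [Finset.mem_Icc] at hb
      show C (G a b) * X 0 ^ (2*(m-a)) * X 1 ^ (2*(m-b))
        = C (G (m - (m - a)) (m - (m - b))) * X 0 ^ (2*(m-a)) * X 1 ^ (2*(m-b))
      have e1 : m - (m - a) = a := by omega
      have e2 : m - (m - b) = b := by omega
      rw [e1, e2]

lemma coeff_G (m : ℕ) (G : ℕ → ℕ → R) (p q : ℕ) :
    coeff (EE p q) (∑ a ∈ Finset.Icc 1 m, ∑ b ∈ Finset.Icc 1 m,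
        (C (G a b) : S) * X 0 ^ (2*(m-a)) * X 1 ^ (2*(m-b)))
      = if p < m ∧ q < m then G (m-p) (m-q) else 0 := by
  rw [Gside, coeff_doublesum]
  simp

lemma EE_sub0 (p q : ℕ) (hp : 1 ≤ p) : EE p q - Finsupp.single 0 2 = EE (p-1) q := by
  ext x
  fin_cases x <;> simp [EE, Finsupp.single_apply] <;> omega

lemma EE_sub1 (p q : ℕ) (hq : 1 ≤ q) : EE p q - Finsupp.single 1 2 = EE p (q-1) := by
  ext x
  fin_cases x <;> simp [EE, Finsupp.single_apply] <;> omega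

lemma EE_app0 (p q : ℕ) : (EE p q) 0 = 2*p := by simp [EE, Finsupp.single_apply]
lemma EE_app1 (p q : ℕ) : (EE p q) 1 = 2*q := by simp [EE, Finsupp.single_apply]

lemma coeff_lhs (F : S) (p q : ℕ) :
    coeff (EE p q) ((X 0 ^ 2 - X 1 ^ 2 : S) * F)
      = (if 1 ≤ p then coeff (EE (p-1) q) F else 0)
        - (if 1 ≤ q then coeff (EE p (q-1)) F else 0) := by
  rw [sub_mul, coeff_sub, X_pow_eq_monomial, X_pow_eq_monomial,
    coeff_monomial_mul', coeff_monomial_mul']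
  congr 1
  · by_cases hp : 1 ≤ p
    · rw [if_pos (Finsupp.single_le_iff.mpr (by rw [EE_app0]; omega)), if_pos hp,
        one_mul, EE_sub0 p q hp]
    · rw [if_neg, if_neg hp]
      intro h
      have := Finsupp.single_le_iff.mp h
      rw [EE_app0] at this
      omega
  · by_cases hq : 1 ≤ q
    · rw [if_pos (Finsupp.single_le_iff.mpr (by rw [EE_app1]; omega)), if_pos hq,
        one_mul, EE_sub1 p q hq]
    · rw [if_neg, if_neg hq]
      intro h
      have := Finsupp.single_le_iff.mp h
      rw [EE_app1] at this
      omega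

/-- Stabilization of the metric components in the relabeled variables: if the families
`Gl a b` and `Glr a b` of polynomials in the `ỹ` variables satisfy the generating function
identities for `B_l` (with `ỹ^i = y^{k+1-i}`) and `B_{l+r}` (with `ỹ^i = y^{k+r+1-i}`)
respectively, then for `r ≥ 1` and all `i, j ≥ 1` with `i + j ≤ l` one has
`g_{(l)}^{l+1-i, l+1-j}(ỹ) = g_{(l+r)}^{l+r+1-i, l+r+1-j}(ỹ)`. -/
theorem stmt4 (k : ℤ) (l r : ℕ) (hr : 1 ≤ r)
    (Gl Glr : ℕ → ℕ → MvPolynomial ℤ ℚ)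
    (hGl : (X 0 ^ 2 - X 1 ^ 2) *
        ∑ a ∈ Finset.Icc 1 l, ∑ b ∈ Finset.Icc 1 l,
          (C (Gl a b) : MvPolynomial (Fin 2) (MvPolynomial ℤ ℚ)) *
            X 0 ^ (2 * (l - a)) * X 1 ^ (2 * (l - b)) = Ngen k l)
    (hGlr : (X 0 ^ 2 - X 1 ^ 2) *
        ∑ a ∈ Finset.Icc 1 (l + r), ∑ b ∈ Finset.Icc 1 (l + r),
          (C (Glr a b) : MvPolynomial (Fin 2) (MvPolynomial ℤ ℚ)) *
            X 0 ^ (2 * ((l + r) - a)) * X 1 ^ (2 * ((l + r) - b)) = Ngen (k + r) (l + r))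
    (i j : ℕ) (hi : 1 ≤ i) (hj : 1 ≤ j) (hij : i + j ≤ l) :
    Gl (l + 1 - i) (l + 1 - j) = Glr (l + r + 1 - i) (l + r + 1 - j) := by
  set F1 : S := ∑ a ∈ Finset.Icc 1 l, ∑ b ∈ Finset.Icc 1 l,
      (C (Gl a b) : S) * X 0 ^ (2 * (l - a)) * X 1 ^ (2 * (l - b)) with hF1
  set F2 : S := ∑ a ∈ Finset.Icc 1 (l + r), ∑ b ∈ Finset.Icc 1 (l + r),
      (C (Glr a b) : S) * X 0 ^ (2 * ((l + r) - a)) * X 1 ^ (2 * ((l + r) - b)) with hF2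
  set c1 : ℕ → ℕ → R := fun p q => coeff (EE p q) F1 with hc1
  set c2 : ℕ → ℕ → R := fun p q => coeff (EE p q) F2 with hc2
  have rec1 : ∀ p q : ℕ,
      (if 1 ≤ p then c1 (p-1) q else 0) - (if 1 ≤ q then c1 p (q-1) else 0)
        = coeff (EE p q) (Ngen k l) := by
    intro p q
    rw [hc1, ← coeff_lhs F1 p q, hGl]
  have rec2 : ∀ p q : ℕ,
      (if 1 ≤ p then c2 (p-1) q else 0) - (if 1 ≤ q then c2 p (q-1) else 0)
        = coeff (EE p q) (Ngen (k + r) (l + r)) := by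
    intro p q
    rw [hc2, ← coeff_lhs F2 p q, hGlr]
  have step : ∀ p q : ℕ, p + 2 ≤ l → q + 1 ≤ l →
      c1 p q - c2 p q
        = (if 1 ≤ q then c1 (p+1) (q-1) - c2 (p+1) (q-1) else 0) := by
    intro p q hp hq
    have h1 := rec1 (p+1) q
    have h2 := rec2 (p+1) q
    have hn : coeff (EE (p+1) q) (Ngen k l) = coeff (EE (p+1) q) (Ngen (k + r) (l + r)) :=
      Ncoeff_eq k l r (p+1) q (by omega) hq
    rw [if_pos (by omega : 1 ≤ p + 1), Nat.add_sub_cancel] at h1 h2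
    by_cases hq1 : 1 ≤ q
    · rw [if_pos hq1] at h1 h2 ⊢
      linear_combination h1 - h2 + hn
    · rw [if_neg hq1] at h1 h2 ⊢
      linear_combination h1 - h2 + hn
  have main : ∀ q p : ℕ, p + q + 2 ≤ l → c1 p q = c2 p q := by
    intro q
    induction q with
    | zero =>
      intro p h
      have := step p 0 (by omega) (by omega)
      rw [if_neg (by omega)] at this
      exact sub_eq_zero.mp this
    | succ q ih =>
      intro p h
      have hs := step p (q+1) (by omega) (by omega)
      rw [if_pos (by omega : 1 ≤ q + 1), Nat.add_sub_cancel] at hs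
      have h2 := ih (p+1) (by omega)
      rw [h2, sub_self] at hs
      exact sub_eq_zero.mp hs
  have hfin := main (j-1) (i-1) (by omega)
  have e1 : c1 (i-1) (j-1) = Gl (l + 1 - i) (l + 1 - j) := by
    show coeff (EE (i-1) (j-1)) F1 = _
    rw [hF1, coeff_G l Gl, if_pos ⟨by omega, by omega⟩]
    congr 1 <;> omega
  have e2 : c2 (i-1) (j-1) = Glr (l + r + 1 - i) (l + r + 1 - j) := by
    show coeff (EE (i-1) (j-1)) F2 = _
    rw [hF2, coeff_G (l+r) Glr, if_pos ⟨by omega, by omega⟩]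
    congr 1 <;> omega
  rw [← e1, ← e2, hfin]
end

section
/- Let $g^{ab}$ be the $B_l$ orbit-space metric components as quasihomogeneous polynomials in $y^1,\dots,y^l$ with $\deg y^p = p$ and $\deg g^{ab} = a+b-1$, each of polynomial degree at most 2. If indices satisfy $a \ge k+l+1-\gamma$, $b \ge k+l+1-\delta$, $c \le \alpha$ with $k+1 \le \gamma,\delta \le l$, $1 \le \alpha \le k$, and $\gamma+\delta \le k+l$, then $\frac{\partial g^{ab}}{\partial y^c} = 0$. -/
/-!
A monomial of total degree at most 2 in `y^1, …, y^l` that contains `y^c` has weight at most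
`c + l`, whereas `a + b - 1 ≥ 2(k + l + 1) - (γ + δ) - 1 ≥ k + l + 1 > α + l ≥ c + l`.
So no monomial of `G` contains `y^c`.
-/

open MvPolynomial

namespace Finsupp

variable {σ : Type*} {w : σ → ℕ} {L : ℕ} {f : σ →₀ ℕ}

theorem weight_le_degree_mul (hw : ∀ j ∈ f.support, w j ≤ L) : weight w f ≤ degree f * L := by
  rw [weight_apply, degree_apply, Finset.sum_mul, Finsupp.sum]
  exact Finset.sum_le_sum fun j hj => Nat.mul_le_mul_left _ (hw j hj)

theorem weight_le_add_degree_sub_one_mul {i : σ} (hi : f i ≠ 0)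
    (hw : ∀ j ∈ f.support, w j ≤ L) : weight w f ≤ w i + (degree f - 1) * L := by
  have hdeg : degree (f - single i 1) = degree f - 1 := by
    conv_rhs => rw [← sub_add_single_one_cancel hi, map_add, degree_single]
    simp
  have hsupp : (f - single i 1).support ⊆ f.support := fun j hj => by
    simp only [mem_support_iff, coe_tsub, Pi.sub_apply] at hj ⊢
    omega
  rw [← weight_sub_single_add hi, ← hdeg, add_comm]
  exact Nat.add_le_add_left (weight_le_degree_mul fun j hj => hw j (hsupp hj)) _

end Finsupp

namespace MvPolynomial

variable {R σ : Type*} [CommSemiring R] {w : σ → ℕ} {L n : ℕ} {φ : MvPolynomial σ R}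

theorem IsWeightedHomogeneous.le_add_totalDegree_sub_one_mul_of_mem_vars
    (hφ : φ.IsWeightedHomogeneous w n) (hw : ∀ j ∈ φ.vars, w j ≤ L) {i : σ} (hi : i ∈ φ.vars) :
    n ≤ w i + (φ.totalDegree - 1) * L := by
  obtain ⟨d, hd, hid⟩ := (mem_vars_iff_mem_support i).mp hi
  have hdw : ∀ j ∈ d.support, w j ≤ L := fun j hj =>
    hw j ((mem_vars_iff_mem_support j).mpr ⟨d, hd, hj⟩)
  calc n = Finsupp.weight w d := (hφ (mem_support_iff.mp hd)).symm
    _ ≤ w i + (d.degree - 1) * L :=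
        Finsupp.weight_le_add_degree_sub_one_mul (Finsupp.mem_support_iff.mp hid) hdw
    _ ≤ w i + (φ.totalDegree - 1) * L := by
        gcongr
        exact le_totalDegree hd

end MvPolynomial

theorem stmt5_general (l k α γ δ a b c : ℕ)
    (hα2 : α ≤ k) (hγδ : γ + δ ≤ k + l)
    (ha : k + l + 1 - γ ≤ a) (hb : k + l + 1 - δ ≤ b)
    (hc2 : c ≤ α)
    (G : MvPolynomial ℕ ℚ)
    (hvars : G.vars ⊆ Finset.Icc 1 l)
    (hhom : G.IsWeightedHomogeneous (id : ℕ → ℕ) (a + b - 1))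
    (hdeg : G.totalDegree ≤ 2) :
    pderiv c G = 0 := by
  refine pderiv_eq_zero_of_notMem_vars fun hc => ?_
  have hweight := hhom.le_add_totalDegree_sub_one_mul_of_mem_vars
    (fun j hj => (Finset.mem_Icc.mp (hvars hj)).2) hc
  have hquad : (G.totalDegree - 1) * l ≤ l := mul_le_of_le_one_left l.zero_le (by omega)
  simp only [id] at hweight
  omega

/-- Degree-counting vanishing: let `G` be a polynomial in the variables `y^1, …, y^l`
(the variable indexed by `m : ℕ` standing for `y^m`, so `G.vars ⊆ [1, l]`), quasihomogeneous
of weighted degree `a + b - 1` for the weights `deg y^p = p`, and of total degree at most `2`.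
If `a ≥ k+l+1-γ`, `b ≥ k+l+1-δ`, `c ≤ α` with `k+1 ≤ γ, δ ≤ l`, `1 ≤ α ≤ k` and
`γ + δ ≤ k + l`, then `∂G/∂y^c = 0`. -/
theorem stmt5 (l k α γ δ a b c : ℕ)
    (hγ1 : k + 1 ≤ γ) (hγ2 : γ ≤ l) (hδ1 : k + 1 ≤ δ) (hδ2 : δ ≤ l)
    (hα1 : 1 ≤ α) (hα2 : α ≤ k) (hγδ : γ + δ ≤ k + l)
    (ha : k + l + 1 - γ ≤ a) (hb : k + l + 1 - δ ≤ b)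
    (hc1 : 1 ≤ c) (hc2 : c ≤ α)
    (G : MvPolynomial ℕ ℚ)
    (hvars : G.vars ⊆ Finset.Icc 1 l)
    (hhom : G.IsWeightedHomogeneous (id : ℕ → ℕ) (a + b - 1))
    (hdeg : G.totalDegree ≤ 2) :
    pderiv c G = 0 :=
  stmt5_general l k α γ δ a b c hα2 hγδ ha hb hc2 G hvars hhom hdeg
end

section
/- Let $\mathcal{F}$ be a smooth function of variables $v^\mu$ with constant invertible symmetric matrix $\eta_{\mu\nu} = \partial_1\partial_\mu\partial_\nu \mathcal{F}$ satisfying the WDVV equations $\sum_{\nu,\mu} \mathcal{F}_{\sigma\gamma\nu}\, \eta^{\nu\mu}\, \mathcal{F}_{\mu\alpha\beta} = \sum_{\nu,\mu} \mathcal{F}_{\alpha\gamma\nu}\, \eta^{\nu\mu}\, \mathcal{F}_{\mu\sigma\beta}$ (where $\mathcal{F}_{abc}$ denotes third partial derivatives). Let $f$ be a smooth function of variables $t_\mu$ whose derivatives satisfy $\partial_\gamma(\partial_\beta\partial_1 f) = \sum_{\mu,\nu} \mathcal{F}_{\gamma\beta\mu}|_{v = \eta^{-1}\partial_1\partial_\bullet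 f}\, \eta^{\mu\nu}\, \partial_1(\partial_1\partial_\nu f)$ for all $\beta,\gamma$. Then the expressions $E_{\alpha\beta\gamma} := \partial_\gamma\big(\mathcal{F}_{\alpha\beta}|_{v = \eta^{-1}\partial_1\partial_\bullet f}\big)$, where $\mathcal{F}_{\alpha\beta} = \partial_\alpha\partial_\beta\mathcal{F}$, are totally symmetric in $(\alpha,\beta,\gamma)$; i.e., the system $\partial_\alpha\partial_\beta f = \mathcal{F}_{\alpha\beta}|_{v=\eta^{-1}\partial_1\partial_\bullet f}$ is consistent. -/
/-- Partial derivative in the `i`-th coordinate direction. -/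
noncomputable def pd {ι : Type*} [Fintype ι] [DecidableEq ι]
    (i : ι) (f : (ι → ℝ) → ℝ) : (ι → ℝ) → ℝ :=
  fun x => fderiv ℝ f x (Pi.single i 1)

section Aux

variable {ι : Type*} [Fintype ι] [DecidableEq ι]

lemma contDiff_pd {g : (ι → ℝ) → ℝ} (hg : ContDiff ℝ (⊤ : ℕ∞) g) (i : ι) :
    ContDiff ℝ (⊤ : ℕ∞) (pd i g) :=
  (hg.fderiv_right (by simp)).clm_apply contDiff_const

lemma pd_comm {g : (ι → ℝ) → ℝ} (hg : ContDiff ℝ (⊤ : ℕ∞) g) (i j : ι) (x : ι → ℝ) :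
    pd i (pd j g) x = pd j (pd i g) x := by
  have hdg : Differentiable ℝ g := hg.differentiable (by simp)
  have hc : ContDiff ℝ (⊤ : ℕ∞) (fderiv ℝ g) := hg.fderiv_right (by simp)
  have hfd : Differentiable ℝ (fderiv ℝ g) := hc.differentiable (by simp)
  have key : ∀ (v w : ι → ℝ),
      fderiv ℝ (fun y => fderiv ℝ g y v) x w = fderiv ℝ (fderiv ℝ g) x w v := by
    intro v w
    have h := fderiv_clm_apply (hfd x) (differentiableAt_const v)
    rw [show (fun y => fderiv ℝ g y v)
        = (fun y => (fderiv ℝ g y) ((fun _ : ι → ℝ => v) y)) from rfl, h]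
    simp
  have symm := second_derivative_symmetric (f' := fderiv ℝ g)
    (fun y => hdg.differentiableAt.hasFDerivAt) ((hfd x).hasFDerivAt)
  show fderiv ℝ (fun y => fderiv ℝ g y (Pi.single j 1)) x (Pi.single i 1)
      = fderiv ℝ (fun y => fderiv ℝ g y (Pi.single i 1)) x (Pi.single j 1)
  rw [key, key, symm]

lemma clm_eq_sum (L : (ι → ℝ) →L[ℝ] ℝ) (w : ι → ℝ) :
    L w = ∑ δ, w δ * L (Pi.single δ 1) := by
  conv_lhs => rw [← Finset.univ_sum_single w, map_sum]
  refine Finset.sum_congr rfl fun δ _ => ?_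
  have h : Pi.single δ (w δ) = (w δ) • (Pi.single δ 1 : ι → ℝ) := by
    ext k; by_cases h : k = δ <;> simp [Pi.single_apply, h]
  rw [h, map_smul, smul_eq_mul]

lemma pd_sum (c : ι → ℝ) (u : ι → (ι → ℝ) → ℝ) (hu : ∀ ω, Differentiable ℝ (u ω))
    (γ : ι) (t : ι → ℝ) :
    pd γ (fun s => ∑ ω, c ω * u ω s) t = ∑ ω, c ω * pd γ (u ω) t := by
  unfold pd
  rw [fderiv_fun_sum (fun ω _ => ((hu ω t).const_mul (c ω)))]
  rw [ContinuousLinearMap.sum_apply]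
  refine Finset.sum_congr rfl fun ω _ => ?_
  rw [fderiv_const_mul (hu ω t)]
  simp

lemma pd_comp (G : (ι → ℝ) → ℝ) (hG : ContDiff ℝ (⊤ : ℕ∞) G)
    (sub : (ι → ℝ) → (ι → ℝ)) (hsub : Differentiable ℝ sub) (γ : ι) (t : ι → ℝ) :
    pd γ (fun s => G (sub s)) t
      = ∑ δ, pd γ (fun s => sub s δ) t * pd δ G (sub t) := by
  have hcomp : ∀ i, Differentiable ℝ (fun x => sub x i) := differentiable_pi.1 hsub
  have h1 : fderiv ℝ (G ∘ sub) t = (fderiv ℝ G (sub t)).comp (fderiv ℝ sub t) :=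
    fderiv_comp t (hG.differentiable (by simp) _) (hsub t)
  have h2 : pd γ (fun s => G (sub s)) t
      = fderiv ℝ G (sub t) (fderiv ℝ sub t (Pi.single γ 1)) := by
    show fderiv ℝ (G ∘ sub) t (Pi.single γ 1) = _
    rw [h1]; rfl
  rw [h2, clm_eq_sum]
  refine Finset.sum_congr rfl fun δ _ => ?_
  congr 1
  rw [fderiv_pi (fun i => (hcomp i t))]
  simp [pd]

lemma sum_swap4 (T : ι → ι → ι → ι → ℝ) :
    ∑ δ, ∑ ω, ∑ μ, ∑ ν, T δ ω μ ν = ∑ μ, ∑ ν, ∑ δ, ∑ ω, T δ ω μ ν := by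
  calc ∑ δ, ∑ ω, ∑ μ, ∑ ν, T δ ω μ ν
      = ∑ δ, ∑ μ, ∑ ω, ∑ ν, T δ ω μ ν :=
        Finset.sum_congr rfl fun δ _ => Finset.sum_comm
    _ = ∑ μ, ∑ δ, ∑ ω, ∑ ν, T δ ω μ ν := Finset.sum_comm
    _ = ∑ μ, ∑ δ, ∑ ν, ∑ ω, T δ ω μ ν :=
        Finset.sum_congr rfl fun μ _ => Finset.sum_congr rfl fun δ _ => Finset.sum_comm
    _ = ∑ μ, ∑ ν, ∑ δ, ∑ ω, T δ ω μ ν :=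
        Finset.sum_congr rfl fun μ _ => Finset.sum_comm

lemma rearrange (A : ι → ℝ) (B P C : ι → ι → ℝ) (c : ι → ℝ) :
    ∑ δ, (∑ ω, B δ ω * (∑ μ, ∑ ν, P ω μ * C μ ν * c ν)) * A δ
      = ∑ μ, ∑ ν, (∑ δ, ∑ ω, A δ * B δ ω * P ω μ) * C μ ν * c ν := by
  simp only [Finset.sum_mul, Finset.mul_sum]
  rw [sum_swap4 (fun δ ω μ ν => B δ ω * (P ω μ * C μ ν * c ν) * A δ)]
  refine Finset.sum_congr rfl fun μ _ => Finset.sum_congr rfl fun ν _ =>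
    Finset.sum_congr rfl fun δ _ => Finset.sum_congr rfl fun ω _ => by ring

end Aux

/-- Consistency of the hierarchy: let `F` be a smooth potential with constant invertible
symmetric `η_{μν} = ∂_1∂_μ∂_ν F` satisfying the WDVV equations, and let `f` be a smooth
function whose derivatives satisfy the flow compatibility hypothesis
`∂_γ∂_β∂_1 f = ∑ F_{γβμ}|_{v = η⁻¹ ∂_1∂_• f} η^{μν} ∂_1∂_1∂_ν f`.  Then the expressions
`E_{αβγ} = ∂_γ (∂_α∂_β F ∘ sub)`, where `sub t = η⁻¹ (∂_1∂_• f)(t)`, are totally symmetric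
in `(α, β, γ)`; i.e. the system `∂_α∂_β f = (∂_α∂_β F)|_{v = η⁻¹ ∂_1∂_• f}` is consistent. -/
theorem stmt9 {ι : Type*} [Fintype ι] [DecidableEq ι] (one : ι)
    (F : (ι → ℝ) → ℝ) (hF : ContDiff ℝ (⊤ : ℕ∞) F)
    (η : Matrix ι ι ℝ) (hsymm : η.IsSymm) [Invertible η]
    (hconst : ∀ (v : ι → ℝ) (μ ν : ι), pd one (pd μ (pd ν F)) v = η μ ν)
    (hWDVV : ∀ (v : ι → ℝ) (σ γ α β : ι),
      ∑ ν, ∑ μ, pd σ (pd γ (pd ν F)) v * η⁻¹ ν μ * pd μ (pd α (pd β F)) v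
        = ∑ ν, ∑ μ, pd α (pd γ (pd ν F)) v * η⁻¹ ν μ * pd μ (pd σ (pd β F)) v)
    (f : (ι → ℝ) → ℝ) (hf : ContDiff ℝ (⊤ : ℕ∞) f)
    (sub : (ι → ℝ) → (ι → ℝ))
    (hsub : ∀ (t : ι → ℝ) (ε : ι), sub t ε = ∑ ω, η⁻¹ ε ω * pd one (pd ω f) t)
    (hflow : ∀ (t : ι → ℝ) (β γ : ι),
      pd γ (pd β (pd one f)) t
        = ∑ μ, ∑ ν, pd γ (pd β (pd μ F)) (sub t) * η⁻¹ μ ν * pd one (pd one (pd ν f)) t) :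
    ∀ (α β γ : ι) (t : ι → ℝ),
      pd γ (fun s => pd α (pd β F) (sub s)) t = pd α (fun s => pd γ (pd β F) (sub s)) t ∧
      pd γ (fun s => pd α (pd β F) (sub s)) t = pd β (fun s => pd α (pd γ F) (sub s)) t := by
  have hG : ∀ a b : ι, ContDiff ℝ (⊤ : ℕ∞) (pd a (pd b F)) :=
    fun a b => contDiff_pd (contDiff_pd hF b) a
  have hu : ∀ ω : ι, ContDiff ℝ (⊤ : ℕ∞) (pd one (pd ω f)) :=
    fun ω => contDiff_pd (contDiff_pd hf ω) one
  have hsubd : Differentiable ℝ sub := by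
    have hsubeq : sub = fun t ε => ∑ ω, η⁻¹ ε ω * pd one (pd ω f) t :=
      funext fun t => funext fun ε => hsub t ε
    rw [hsubeq]
    refine differentiable_pi.2 fun ε => ?_
    exact Differentiable.fun_sum fun ω _ =>
      ((hu ω).differentiable (by simp)).const_mul (η⁻¹ ε ω)
  have hcomp_pd : ∀ (δ c : ι) (t : ι → ℝ),
      pd c (fun s => sub s δ) t = ∑ ω, η⁻¹ δ ω * pd c (pd one (pd ω f)) t := by
    intro δ c t
    rw [show (fun s => sub s δ) = fun s => ∑ ω, η⁻¹ δ ω * pd one (pd ω f) s from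
      funext fun s => hsub s δ]
    exact pd_sum _ _ (fun ω => (hu ω).differentiable (by simp)) c t
  have hflow' : ∀ (t : ι → ℝ) (ω c : ι),
      pd c (pd one (pd ω f)) t
        = ∑ μ, ∑ ν, pd c (pd ω (pd μ F)) (sub t) * η⁻¹ μ ν
            * pd one (pd one (pd ν f)) t := by
    intro t ω c
    rw [show pd one (pd ω f) = pd ω (pd one f) from funext (pd_comm hf one ω)]
    exact hflow t ω c
  have sw12 : ∀ (a b c : ι) (v : ι → ℝ),
      pd a (pd b (pd c F)) v = pd b (pd a (pd c F)) v :=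
    fun a b c v => pd_comm (contDiff_pd hF c) a b v
  have sw23f : ∀ b c : ι, pd b (pd c F) = pd c (pd b F) :=
    fun b c => funext (pd_comm hF b c)
  have E_eq : ∀ (a b c : ι) (t : ι → ℝ),
      pd c (fun s => pd a (pd b F) (sub s)) t
        = ∑ μ, ∑ ν, (∑ δ, ∑ ω, pd δ (pd a (pd b F)) (sub t) * η⁻¹ δ ω
            * pd c (pd ω (pd μ F)) (sub t)) * η⁻¹ μ ν
            * pd one (pd one (pd ν f)) t := by
    intro a b c t
    rw [pd_comp (pd a (pd b F)) (hG a b) sub hsubd c t]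
    calc ∑ δ, pd c (fun s => sub s δ) t * pd δ (pd a (pd b F)) (sub t)
        = ∑ δ, (∑ ω, η⁻¹ δ ω * (∑ μ, ∑ ν, pd c (pd ω (pd μ F)) (sub t)
            * η⁻¹ μ ν * pd one (pd one (pd ν f)) t))
            * pd δ (pd a (pd b F)) (sub t) := by
          refine Finset.sum_congr rfl fun δ _ => ?_
          rw [hcomp_pd]
          congr 1
          exact Finset.sum_congr rfl fun ω _ => by rw [hflow']
      _ = _ := rearrange (fun δ => pd δ (pd a (pd b F)) (sub t))
            (fun δ ω => η⁻¹ δ ω) (fun ω μ => pd c (pd ω (pd μ F)) (sub t))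
            (fun μ ν => η⁻¹ μ ν) (fun ν => pd one (pd one (pd ν f)) t)
  have hW : ∀ (v : ι → ℝ) (a b c μ : ι),
      ∑ δ, ∑ ω, pd δ (pd a (pd b F)) v * η⁻¹ δ ω * pd c (pd ω (pd μ F)) v
        = ∑ δ, ∑ ω, pd δ (pd c (pd b F)) v * η⁻¹ δ ω * pd a (pd ω (pd μ F)) v := by
    intro v a b c μ
    have h := hWDVV v a b c μ
    calc ∑ δ, ∑ ω, pd δ (pd a (pd b F)) v * η⁻¹ δ ω * pd c (pd ω (pd μ F)) v
        = ∑ δ, ∑ ω, pd a (pd b (pd δ F)) v * η⁻¹ δ ω * pd ω (pd c (pd μ F)) v := by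
          refine Finset.sum_congr rfl fun δ _ => Finset.sum_congr rfl fun ω _ => ?_
          rw [sw12 δ a b, sw23f δ b, sw12 c ω μ]
      _ = ∑ δ, ∑ ω, pd c (pd b (pd δ F)) v * η⁻¹ δ ω * pd ω (pd a (pd μ F)) v := h
      _ = ∑ δ, ∑ ω, pd δ (pd c (pd b F)) v * η⁻¹ δ ω * pd a (pd ω (pd μ F)) v := by
          refine Finset.sum_congr rfl fun δ _ => Finset.sum_congr rfl fun ω _ => ?_
          rw [sw12 δ c b, sw23f δ b, sw12 a ω μ]
  have key : ∀ (a b c : ι) (t : ι → ℝ),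
      pd c (fun s => pd a (pd b F) (sub s)) t
        = pd a (fun s => pd c (pd b F) (sub s)) t := by
    intro a b c t
    rw [E_eq, E_eq]
    refine Finset.sum_congr rfl fun μ _ => Finset.sum_congr rfl fun ν _ => ?_
    congr 2
    exact hW (sub t) a b c μ
  intro α β γ t
  refine ⟨key α β γ t, ?_⟩
  calc pd γ (fun s => pd α (pd β F) (sub s)) t
      = pd γ (fun s => pd β (pd α F) (sub s)) t := by rw [sw23f α β]
    _ = pd β (fun s => pd γ (pd α F) (sub s)) t := key β α γ t
    _ = pd β (fun s => pd α (pd γ F) (sub s)) t := by rw [sw23f γ α]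
end

section
/- For each $k$ with $1 \le k \le l$, let $\eta^{ij} := \partial g_{(l)}^{ij}/\partial y^k$, where $g_{(l)}$ is the $B_l$ orbit-space metric in $y$-coordinates. Then $\eta^{ij} = 0$ whenever exactly one of $i,j$ is $\le k$, so $\eta$ is block-diagonal with a $k\times k$ block and an $(l-k)\times(l-k)$ block. -/
open MvPolynomial

/-- `P_l(u) = u^{2l} + ∑_{j=1}^{l} u^{2(l-j)} y^j`, a polynomial in the variable `X w`
(`w = 0` for `u`, `w = 1` for `v`) over the polynomial ring `ℚ[y^j : j ∈ ℕ]`. -/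
noncomputable def Pl (l : ℕ) (w : Fin 2) : MvPolynomial (Fin 2) (MvPolynomial ℕ ℚ) :=
  X w ^ (2 * l) + ∑ j ∈ Finset.Icc 1 l, C (X j) * X w ^ (2 * (l - j))

abbrev SS := MvPolynomial ℕ ℚ
abbrev RR := MvPolynomial (Fin 2) SS

/-- `Ysc p` is `y^p`, with the convention `y^0 = 1`. -/
noncomputable def Ysc : ℕ → SS := fun p => if p = 0 then 1 else X p

lemma single01 (a b c d : ℕ) :
    (Finsupp.single (0 : Fin 2) a + Finsupp.single 1 b
      = Finsupp.single (0 : Fin 2) c + Finsupp.single 1 d) ↔ a = c ∧ b = d := by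
  constructor
  · intro h
    constructor
    · have := DFunLike.congr_fun h 0; simpa using this
    · have := DFunLike.congr_fun h 1; simpa using this
  · rintro ⟨rfl, rfl⟩; rfl

lemma Pl_eq (l : ℕ) (w : Fin 2) :
    Pl l w = ∑ p ∈ Finset.range (l+1), monomial (Finsupp.single w (2*(l-p))) (Ysc p) := by
  rw [Finset.sum_range_succ']
  have h1 : ∀ p : ℕ, monomial (Finsupp.single w (2*(l-(p+1)))) (Ysc (p+1))
      = C (X (p+1)) * (X w : RR) ^ (2*(l-(p+1))) := by
    intro p
    rw [X_pow_eq_monomial, C_mul_monomial, mul_one, Ysc]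
    simp
  have h0 : monomial (Finsupp.single w (2*(l-0))) (Ysc 0) = (X w : RR) ^ (2*l) := by
    rw [Ysc]; simp [X_pow_eq_monomial]
  rw [h0, Pl, add_comm]
  congr 1
  rw [← Finset.Ico_add_one_right_eq_Icc, Finset.sum_Ico_eq_sum_range]
  refine Finset.sum_congr rfl fun p _ => ?_
  rw [h1, add_comm 1 p]

lemma XP (l : ℕ) (w : Fin 2) :
    (X w : RR) * pderiv w (Pl l w)
      = ∑ p ∈ Finset.range (l+1),
          monomial (Finsupp.single w (2*(l-p))) (Ysc p * (2*(l-p) : ℕ)) := by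
  rw [Pl_eq, map_sum, Finset.mul_sum]
  refine Finset.sum_congr rfl fun p _ => ?_
  rw [pderiv_monomial_single]
  rcases Nat.eq_zero_or_pos (2*(l-p)) with h | h
  · rw [h]; simp
  · rw [← pow_one (X w : RR), X_pow_eq_monomial, monomial_mul, ← Finsupp.single_add, one_mul,
      show 1 + (2*(l-p)-1) = 2*(l-p) from by omega]

lemma RHS_eq (l : ℕ) :
    (2 : RR) * (X 0 * pderiv 0 (Pl l 0) * Pl l 1 - X 1 * Pl l 0 * pderiv 1 (Pl l 1))
    = ∑ p ∈ Finset.range (l+1), ∑ q ∈ Finset.range (l+1),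
        monomial (Finsupp.single (0 : Fin 2) (2*(l-p)) + Finsupp.single 1 (2*(l-q)))
          (2 * (Ysc p * Ysc q) * (((2*(l-p) : ℕ) : SS) - ((2*(l-q) : ℕ) : SS))) := by
  have h2 : (X 1 : RR) * Pl l 0 * pderiv 1 (Pl l 1)
      = Pl l 0 * ((X 1 : RR) * pderiv 1 (Pl l 1)) := by ring
  rw [h2, XP l 0, XP l 1, Pl_eq l 0, Pl_eq l 1, Finset.sum_mul_sum, Finset.sum_mul_sum,
    ← Finset.sum_sub_distrib, Finset.mul_sum]
  refine Finset.sum_congr rfl fun p _ => ?_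
  rw [← Finset.sum_sub_distrib, Finset.mul_sum]
  refine Finset.sum_congr rfl fun q _ => ?_
  rw [monomial_mul, monomial_mul, ← map_sub,
    show (2 : RR) = C (2 : SS) from by rw [map_ofNat], C_mul_monomial]
  congr 1
  ring

lemma term_eq (c : SS) (e f : ℕ) :
    (C c : RR) * X 0 ^ e * X 1 ^ f
      = monomial (Finsupp.single (0 : Fin 2) e + Finsupp.single 1 f) c := by
  rw [X_pow_eq_monomial, X_pow_eq_monomial, C_mul_monomial, monomial_mul, mul_one, mul_one]

lemma Xsq_mul (w : Fin 2) (μ : Fin 2 →₀ ℕ) (c : SS) :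
    (X w : RR) ^ 2 * monomial μ c = monomial (Finsupp.single w 2 + μ) c := by
  rw [X_pow_eq_monomial, monomial_mul, one_mul]

lemma LHS_eq (l : ℕ) (G : ℕ → ℕ → SS) :
    (X 0 ^ 2 - X 1 ^ 2) *
        ∑ i ∈ Finset.Icc 1 l, ∑ j ∈ Finset.Icc 1 l,
          (C (G i j) : RR) * X 0 ^ (2 * (l - i)) * X 1 ^ (2 * (l - j))
    = (∑ i ∈ Finset.Icc 1 l, ∑ j ∈ Finset.Icc 1 l,
        monomial (Finsupp.single (0 : Fin 2) (2+2*(l-i)) + Finsupp.single 1 (2*(l-j))) (G i j))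
      - (∑ i ∈ Finset.Icc 1 l, ∑ j ∈ Finset.Icc 1 l,
        monomial (Finsupp.single (0 : Fin 2) (2*(l-i)) + Finsupp.single 1 (2+2*(l-j))) (G i j)) := by
  rw [sub_mul, Finset.mul_sum, Finset.mul_sum]
  congr 1
  · refine Finset.sum_congr rfl fun i _ => ?_
    rw [Finset.mul_sum]
    refine Finset.sum_congr rfl fun j _ => ?_
    rw [term_eq, Xsq_mul, ← add_assoc, ← Finsupp.single_add]
  · refine Finset.sum_congr rfl fun i _ => ?_
    rw [Finset.mul_sum]
    refine Finset.sum_congr rfl fun j _ => ?_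
    rw [term_eq, Xsq_mul, add_left_comm, ← Finsupp.single_add]

lemma coeff_dsum (s t : Finset ℕ) (e f : ℕ → ℕ) (c : ℕ → ℕ → SS) (a b : ℕ) :
    coeff (Finsupp.single (0 : Fin 2) a + Finsupp.single 1 b)
      (∑ p ∈ s, ∑ q ∈ t,
        monomial (Finsupp.single (0 : Fin 2) (e p) + Finsupp.single 1 (f q)) (c p q))
    = ∑ p ∈ s, ∑ q ∈ t, if e p = a ∧ f q = b then c p q else 0 := by
  rw [coeff_sum]
  refine Finset.sum_congr rfl fun p _ => ?_
  rw [coeff_sum]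
  refine Finset.sum_congr rfl fun q _ => ?_
  rw [coeff_monomial]
  by_cases h : e p = a ∧ f q = b
  · rw [if_pos ((single01 _ _ _ _).mpr h), if_pos h]
  · rw [if_neg (fun hh => h ((single01 _ _ _ _).mp hh)), if_neg h]

lemma double_pick {M : Type*} [AddCommMonoid M] (s t : Finset ℕ) (e f : ℕ → ℕ)
    (c : ℕ → ℕ → M) (a b p0 q0 : ℕ) (hp0 : p0 ∈ s) (hq0 : q0 ∈ t)
    (he : ∀ p ∈ s, (e p = a ↔ p = p0)) (hf : ∀ q ∈ t, (f q = b ↔ q = q0)) :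
    (∑ p ∈ s, ∑ q ∈ t, if e p = a ∧ f q = b then c p q else 0) = c p0 q0 := by
  rw [Finset.sum_eq_single p0]
  · rw [Finset.sum_eq_single q0]
    · rw [if_pos ⟨(he p0 hp0).mpr rfl, (hf q0 hq0).mpr rfl⟩]
    · intro q hq hne; rw [if_neg]; rintro ⟨-, h2⟩; exact hne ((hf q hq).mp h2)
    · intro h; exact absurd hq0 h
  · intro p hp hne
    refine Finset.sum_eq_zero fun q hq => ?_
    rw [if_neg]; rintro ⟨h1, -⟩; exact hne ((he p hp).mp h1)
  · intro h; exact absurd hp0 h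

lemma pick1 (l a b : ℕ) (G : ℕ → ℕ → SS) :
    (∑ p ∈ Finset.Icc 1 l, ∑ q ∈ Finset.Icc 1 l,
        if 2+2*(l-p) = 2*a ∧ 2*(l-q) = 2*b then G p q else 0)
    = if 1 ≤ a ∧ a ≤ l ∧ b+1 ≤ l then G (l-(a-1)) (l-b) else 0 := by
  by_cases hc : 1 ≤ a ∧ a ≤ l ∧ b+1 ≤ l
  · rw [if_pos hc]
    exact double_pick _ _ _ _ G (2*a) (2*b) (l-(a-1)) (l-b)
      (Finset.mem_Icc.mpr (by omega)) (Finset.mem_Icc.mpr (by omega))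
      (fun p hp => by rw [Finset.mem_Icc] at hp; omega)
      (fun q hq => by rw [Finset.mem_Icc] at hq; omega)
  · rw [if_neg hc]
    refine Finset.sum_eq_zero fun p hp => Finset.sum_eq_zero fun q hq => ?_
    rw [Finset.mem_Icc] at hp hq
    rw [if_neg (by omega)]

lemma pick2 (l a b : ℕ) (G : ℕ → ℕ → SS) :
    (∑ p ∈ Finset.Icc 1 l, ∑ q ∈ Finset.Icc 1 l,
        if 2*(l-p) = 2*a ∧ 2+2*(l-q) = 2*b then G p q else 0)
    = if 1 ≤ b ∧ b ≤ l ∧ a+1 ≤ l then G (l-a) (l-(b-1)) else 0 := by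
  by_cases hc : 1 ≤ b ∧ b ≤ l ∧ a+1 ≤ l
  · rw [if_pos hc]
    exact double_pick _ _ _ _ G (2*a) (2*b) (l-a) (l-(b-1))
      (Finset.mem_Icc.mpr (by omega)) (Finset.mem_Icc.mpr (by omega))
      (fun p hp => by rw [Finset.mem_Icc] at hp; omega)
      (fun q hq => by rw [Finset.mem_Icc] at hq; omega)
  · rw [if_neg hc]
    refine Finset.sum_eq_zero fun p hp => Finset.sum_eq_zero fun q hq => ?_
    rw [Finset.mem_Icc] at hp hq
    rw [if_neg (by omega)]

lemma pick3 (l a b : ℕ) (c : ℕ → ℕ → SS) :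
    (∑ p ∈ Finset.range (l+1), ∑ q ∈ Finset.range (l+1),
        if 2*(l-p) = 2*a ∧ 2*(l-q) = 2*b then c p q else 0)
    = if a ≤ l ∧ b ≤ l then c (l-a) (l-b) else 0 := by
  by_cases hc : a ≤ l ∧ b ≤ l
  · rw [if_pos hc]
    exact double_pick _ _ _ _ c (2*a) (2*b) (l-a) (l-b)
      (Finset.mem_range.mpr (by omega)) (Finset.mem_range.mpr (by omega))
      (fun p hp => by rw [Finset.mem_range] at hp; omega)
      (fun q hq => by rw [Finset.mem_range] at hq; omega)
  · rw [if_neg hc]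
    refine Finset.sum_eq_zero fun p hp => Finset.sum_eq_zero fun q hq => ?_
    rw [Finset.mem_range] at hp hq
    rw [if_neg (by omega)]

lemma scal (x y : ℚ) (s : SS) : 2 * s * (C x - C y) = C (2*(x-y)) * s := by
  rw [← C_sub, C_mul, show (C (2:ℚ) : SS) = 2 from map_ofNat C 2]
  ring

lemma key_lemma (l : ℕ) (G : ℕ → ℕ → SS)
    (hG : (X 0 ^ 2 - X 1 ^ 2) *
        ∑ i ∈ Finset.Icc 1 l, ∑ j ∈ Finset.Icc 1 l,
          (C (G i j) : MvPolynomial (Fin 2) (MvPolynomial ℕ ℚ)) *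
            X 0 ^ (2 * (l - i)) * X 1 ^ (2 * (l - j))
      = 2 * (X 0 * pderiv 0 (Pl l 0) * Pl l 1 - X 1 * Pl l 0 * pderiv 1 (Pl l 1)))
    (a b : ℕ) :
    ((if 1 ≤ a ∧ a ≤ l ∧ b+1 ≤ l then G (l-(a-1)) (l-b) else 0) : SS)
      - (if 1 ≤ b ∧ b ≤ l ∧ a+1 ≤ l then G (l-a) (l-(b-1)) else 0)
    = if a ≤ l ∧ b ≤ l then C (4*((a:ℚ) - (b:ℚ))) * (Ysc (l-a) * Ysc (l-b)) else 0 := by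
  rw [LHS_eq, RHS_eq] at hG
  have h := congrArg (coeff (Finsupp.single (0 : Fin 2) (2*a) + Finsupp.single 1 (2*b))) hG
  rw [coeff_sub, coeff_dsum, coeff_dsum, coeff_dsum, pick1, pick2, pick3] at h
  rw [h]
  by_cases hc : a ≤ l ∧ b ≤ l
  · rw [if_pos hc, if_pos hc, show l-(l-a) = a from by omega, show l-(l-b) = b from by omega,
      ← map_natCast (C : ℚ →+* SS) (2*a), ← map_natCast (C : ℚ →+* SS) (2*b), scal,
      show (2:ℚ)*(((2*a : ℕ):ℚ) - ((2*b : ℕ):ℚ)) = 4*((a:ℚ)-(b:ℚ)) from by push_cast; ring]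
  · rw [if_neg hc, if_neg hc]

/-- The truncated array `Ā(x,y) = G(l-x, l-y)` (zero out of range). -/
noncomputable def AbG (l : ℕ) (G : ℕ → ℕ → SS) (x y : ℕ) : SS :=
  if x+1 ≤ l ∧ y+1 ≤ l then G (l-x) (l-y) else 0

/-- The `∂/∂y^k` of the generating-function coefficient. -/
noncomputable def Dd (l k a b : ℕ) : SS :=
  pderiv k (if a ≤ l ∧ b ≤ l then C (4*((a:ℚ) - (b:ℚ))) * (Ysc (l-a) * Ysc (l-b)) else 0)

lemma key'_lemma (l k : ℕ) (G : ℕ → ℕ → SS)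
    (hkey : ∀ a b : ℕ,
      ((if 1 ≤ a ∧ a ≤ l ∧ b+1 ≤ l then G (l-(a-1)) (l-b) else 0) : SS)
        - (if 1 ≤ b ∧ b ≤ l ∧ a+1 ≤ l then G (l-a) (l-(b-1)) else 0)
      = if a ≤ l ∧ b ≤ l then C (4*((a:ℚ) - (b:ℚ))) * (Ysc (l-a) * Ysc (l-b)) else 0) :
    ∀ a b : ℕ, (if 1 ≤ a then pderiv k (AbG l G (a-1) b) else 0)
      - (if 1 ≤ b then pderiv k (AbG l G a (b-1)) else 0) = Dd l k a b := by
  intro a b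
  have h := congrArg (fun z : SS => pderiv k z) (hkey a b)
  simp only [map_sub] at h
  have e1 : (if 1 ≤ a then pderiv k (AbG l G (a-1) b) else 0)
      = pderiv k ((if 1 ≤ a ∧ a ≤ l ∧ b+1 ≤ l then G (l-(a-1)) (l-b) else 0 : SS)) := by
    by_cases ha : 1 ≤ a
    · rw [if_pos ha, AbG,
        if_congr (show ((a-1)+1 ≤ l ∧ b+1 ≤ l) ↔ (1 ≤ a ∧ a ≤ l ∧ b+1 ≤ l) from by omega) rfl rfl]
    · rw [if_neg ha, if_neg (fun hh : _ ∧ _ => ha hh.1), map_zero]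
  have e2 : (if 1 ≤ b then pderiv k (AbG l G a (b-1)) else 0)
      = pderiv k ((if 1 ≤ b ∧ b ≤ l ∧ a+1 ≤ l then G (l-a) (l-(b-1)) else 0 : SS)) := by
    by_cases hb : 1 ≤ b
    · rw [if_pos hb, AbG,
        if_congr (show (a+1 ≤ l ∧ (b-1)+1 ≤ l) ↔ (1 ≤ b ∧ b ≤ l ∧ a+1 ≤ l) from by omega) rfl rfl]
    · rw [if_neg hb, if_neg (fun hh : _ ∧ _ => hb hh.1), map_zero]
  rw [e1, e2, h, Dd]

lemma tele_lemma (l k : ℕ) (G : ℕ → ℕ → SS)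
    (hkey : ∀ a b : ℕ, (if 1 ≤ a then pderiv k (AbG l G (a-1) b) else 0)
      - (if 1 ≤ b then pderiv k (AbG l G a (b-1)) else 0) = Dd l k a b) :
    ∀ b a : ℕ, pderiv k (AbG l G a b) = ∑ t ∈ Finset.range (b+1), Dd l k (a+1+t) (b-t) := by
  intro b
  induction b with
  | zero =>
    intro a
    have h := hkey (a+1) 0
    rw [if_pos (by omega), if_neg (by omega)] at h
    simp only [Nat.add_sub_cancel, sub_zero] at h
    rw [Finset.sum_range_one]
    exact h
  | succ b ih =>
    intro a
    have h := hkey (a+1) (b+1)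
    rw [if_pos (by omega), if_pos (by omega)] at h
    simp only [Nat.add_sub_cancel] at h
    have h2 : pderiv k (AbG l G a (b+1)) = pderiv k (AbG l G (a+1) b) + Dd l k (a+1) (b+1) := by
      rw [← h]; ring
    rw [h2, ih (a+1), Finset.sum_range_succ' (fun t => Dd l k (a+1+t) (b+1-t)) (b+1)]
    congr 1
    · refine Finset.sum_congr rfl fun t _ => ?_
      rw [show a+1+(t+1) = a+1+1+t from by omega, Nat.succ_sub_succ]

lemma Dd_out (l k a b : ℕ) (h : ¬(a ≤ l ∧ b ≤ l)) : Dd l k a b = 0 := by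
  rw [Dd, if_neg h, map_zero]

lemma Dd_in (l k a b : ℕ) (ha : a ≤ l) (hb : b ≤ l) :
    Dd l k a b = C (4*((a:ℚ)-(b:ℚ)))
      * (pderiv k (Ysc (l-a)) * Ysc (l-b) + Ysc (l-a) * pderiv k (Ysc (l-b))) := by
  rw [Dd, if_pos ⟨ha, hb⟩, pderiv_C_mul, pderiv_mul]

lemma Ysc_pderiv_ne (k p : ℕ) (h : p ≠ k) : pderiv k (Ysc p) = 0 := by
  by_cases h0 : p = 0
  · simp only [Ysc, if_pos h0]; exact pderiv_one
  · simp only [Ysc, if_neg h0]; exact pderiv_X_of_ne h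

lemma Ysc_pderiv_self (k : ℕ) (hk : 1 ≤ k) : pderiv k (Ysc k) = 1 := by
  simp only [Ysc, if_neg (by omega : ¬ k = 0)]; exact pderiv_X_self k

lemma Ysc_ne (m : ℕ) (h : m ≠ 0) : Ysc m = X m := by
  simp only [Ysc, if_neg h]

/-- Block-diagonality of `η = ∂g_{(l)}/∂y^k`: if the family `G i j` of polynomials in
`y^1, …, y^l` satisfies the generating function identity defining the `B_l` orbit-space
metric, then `∂ G^{ij}/∂y^k = 0` whenever exactly one of `i, j` is `≤ k`; i.e. `η` is
block-diagonal with a `k × k` and an `(l-k) × (l-k)` block. -/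
theorem stmt18 (l k : ℕ) (hk1 : 1 ≤ k) (hkl : k ≤ l)
    (G : ℕ → ℕ → MvPolynomial ℕ ℚ)
    (hG : (X 0 ^ 2 - X 1 ^ 2) *
        ∑ i ∈ Finset.Icc 1 l, ∑ j ∈ Finset.Icc 1 l,
          (C (G i j) : MvPolynomial (Fin 2) (MvPolynomial ℕ ℚ)) *
            X 0 ^ (2 * (l - i)) * X 1 ^ (2 * (l - j))
      = 2 * (X 0 * pderiv 0 (Pl l 0) * Pl l 1 - X 1 * Pl l 0 * pderiv 1 (Pl l 1)))
    (i j : ℕ) (hi : i ∈ Finset.Icc 1 l) (hj : j ∈ Finset.Icc 1 l)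
    (hmix : (i ≤ k ∧ k + 1 ≤ j) ∨ (j ≤ k ∧ k + 1 ≤ i)) :
    pderiv k (G i j) = 0 := by
  obtain ⟨hi1, hi2⟩ := Finset.mem_Icc.mp hi
  obtain ⟨hj1, hj2⟩ := Finset.mem_Icc.mp hj
  have hkey := key'_lemma l k G (key_lemma l G hG)
  have ht := tele_lemma l k G hkey
  have hAbG : pderiv k (G i j) = pderiv k (AbG l G (l-i) (l-j)) := by
    rw [AbG, if_pos (by omega : l-i+1 ≤ l ∧ l-j+1 ≤ l),
      show l-(l-i) = i from by omega, show l-(l-j) = j from by omega]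
  rw [hAbG, ht (l-j) (l-i)]
  rcases hmix with ⟨hik, hkj⟩ | ⟨hjk, hki⟩
  · refine Finset.sum_eq_zero fun t ht' => ?_
    rw [Finset.mem_range] at ht'
    by_cases ha : l-i+1+t ≤ l
    · rw [Dd_in l k _ _ ha (by omega), Ysc_pderiv_ne k _ (by omega), Ysc_pderiv_ne k _ (by omega)]
      ring
    · exact Dd_out l k _ _ (by omega)
  · have main : ∀ t ∈ Finset.range (l-j+1), Dd l k (l-i+1+t) (l-j-t)
        = (if t = i-1-k then C (4*((i:ℚ)+(j:ℚ)-1-2*(k:ℚ))) * (X (i+j-1-k) : SS) else 0)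
          - (if t = k-j then C (4*((i:ℚ)+(j:ℚ)-1-2*(k:ℚ))) * (X (i+j-1-k) : SS) else 0) := by
      intro t ht'
      rw [Finset.mem_range] at ht'
      by_cases h1 : t = i-1-k <;> by_cases h2 : t = k-j
      · rw [if_pos h1, if_pos h2, sub_self]
        have hab : l-i+1+t = l-j-t := by omega
        rw [Dd_in l k _ _ (by omega) (by omega), hab, sub_self, mul_zero, map_zero, zero_mul]
      · subst h1
        rw [if_pos rfl, if_neg h2, sub_zero]
        rw [Dd_in l k _ _ (by omega) (by omega),
          show l-(l-i+1+(i-1-k)) = k from by omega,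
          show l-(l-j-(i-1-k)) = i+j-1-k from by omega,
          Ysc_pderiv_self k hk1, Ysc_pderiv_ne k (i+j-1-k) (by omega),
          Ysc_ne (i+j-1-k) (by omega)]
        have hq : (4:ℚ)*((((l-i+1+(i-1-k)) : ℕ):ℚ) - (((l-j-(i-1-k)) : ℕ):ℚ))
            = 4*((i:ℚ)+(j:ℚ)-1-2*(k:ℚ)) := by
          have c1 : (((l-i+1+(i-1-k)) : ℕ):ℚ) = (l:ℚ)-(k:ℚ) := by
            have h' : (l-i+1+(i-1-k)) + k = l := by omega
            have h'' := congrArg (Nat.cast : ℕ → ℚ) h'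
            push_cast at h'' ⊢; linarith
          have c2 : (((l-j-(i-1-k)) : ℕ):ℚ) = (l:ℚ)+(k:ℚ)+1-(i:ℚ)-(j:ℚ) := by
            have h' : (l-j-(i-1-k)) + i + j = l + k + 1 := by omega
            have h'' := congrArg (Nat.cast : ℕ → ℚ) h'
            push_cast at h'' ⊢; linarith
          rw [c1, c2]; ring
        rw [hq]; ring
      · subst h2
        rw [if_neg h1, if_pos rfl, zero_sub]
        rw [Dd_in l k _ _ (by omega) (by omega),
          show l-(l-i+1+(k-j)) = i+j-1-k from by omega,
          show l-(l-j-(k-j)) = k from by omega,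
          Ysc_pderiv_self k hk1, Ysc_pderiv_ne k (i+j-1-k) (by omega),
          Ysc_ne (i+j-1-k) (by omega)]
        have hq : (4:ℚ)*((((l-i+1+(k-j)) : ℕ):ℚ) - (((l-j-(k-j)) : ℕ):ℚ))
            = -(4*((i:ℚ)+(j:ℚ)-1-2*(k:ℚ))) := by
          have c1 : (((l-i+1+(k-j)) : ℕ):ℚ) = (l:ℚ)+(k:ℚ)+1-(i:ℚ)-(j:ℚ) := by
            have h' : (l-i+1+(k-j)) + i + j = l + k + 1 := by omega
            have h'' := congrArg (Nat.cast : ℕ → ℚ) h'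
            push_cast at h'' ⊢; linarith
          have c2 : (((l-j-(k-j)) : ℕ):ℚ) = (l:ℚ)-(k:ℚ) := by
            have h' : (l-j-(k-j)) + k = l := by omega
            have h'' := congrArg (Nat.cast : ℕ → ℚ) h'
            push_cast at h'' ⊢; linarith
          rw [c1, c2]; ring
        rw [hq, map_neg]; ring
      · rw [if_neg h1, if_neg h2, sub_self]
        by_cases ha : l-i+1+t ≤ l
        · rw [Dd_in l k _ _ ha (by omega), Ysc_pderiv_ne k _ (by omega),
            Ysc_pderiv_ne k _ (by omega)]
          ring
        · exact Dd_out l k _ _ (by omega)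
    rw [Finset.sum_congr rfl main, Finset.sum_sub_distrib,
      Finset.sum_ite_eq' (Finset.range (l-j+1)) (i-1-k),
      Finset.sum_ite_eq' (Finset.range (l-j+1)) (k-j),
      if_pos (Finset.mem_range.mpr (by omega)), if_pos (Finset.mem_range.mpr (by omega)),
      sub_self]
end
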